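/- arXiv:2506.00360 — 13 statements merged into one kernel-verified Lean document; each statement's English description precedes it below -/
import Mathlib

section
/- Let n ≥ 2 and suppose (T_n, Y) is a tiling of the symmetric group S_n. Then for every partition λ = (λ_1,…,λ_ℓ) of n satisfying ∑_{i=1}^{ℓ} λ_i(λ_i − 2i + 1) ≥ 0 (equivalently, the sum of the contents of the boxes of the Young diagram of λ is nonnegative), the set Y is λ-transitive. -/
/-- `(X, Y)` is a tiling of the group `G`: every element of `G` can be written as `x * y`
for a unique pair `(x, y) ∈ X × Y`. -/
def IsTiling {G : Type*} [Group G] (X Y : Set G) : Prop :=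
  ∀ g : G, ∃! p : G × G, p.1 ∈ X ∧ p.2 ∈ Y ∧ p.1 * p.2 = g

/-- `T n`: the identity together with all transpositions in the symmetric group `S_n`. -/
def transpositionsWithId (n : ℕ) : Set (Equiv.Perm (Fin n)) :=
  {1} ∪ {σ : Equiv.Perm (Fin n) | σ.IsSwap}

/-!
Encode an ordered set partition of shape `λ` by its block map `c : Fin n → Fin ℓ`; then
`y(P_i) = Q_i` for all `i` says `d ∘ y = c`, where `c` and `d` are the block maps of `P` and `Q`.
Fix `c` and let `N d` be the number of `y ∈ Y` with `d ∘ y = c`. As every permutation is uniquely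
`t * y` with `t ∈ T_n` and `y ∈ Y`, the sum of `N (d ∘ t)` over `t ∈ T_n` counts the permutations
carrying `c` to `d`, a number independent of `d`. So `N` minus a suitable constant is annihilated
by `1 + ∑ t`, `t` running over the transpositions, acting on functions on partitions of shape `λ`.
This operator is positive definite once the content of `λ` is nonnegative: sorting the ordered
pairs `(a, b)` by the blocks of `a` and `b`, the diagonal blocks act trivially and an
off-diagonal block `(i, j)` is bounded below by `-λ_j`, by a Gram argument that moves one point
from block `j` to block `i`. Hence `N` is constant on partitions of shape `λ`; as its values add
up to `|Y|`, the constant does not depend on `c` either.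
-/

open Finset Equiv
open scoped Classical

theorem IsTiling.nonempty_right {G : Type*} [Group G] {X Y : Set G} (h : IsTiling X Y) :
    Y.Nonempty :=
  let ⟨p, ⟨_, hy, _⟩, _⟩ := h 1
  ⟨p.2, hy⟩

theorem IsTiling.sum_eq {G M : Type*} [Group G] [Fintype G] [AddCommMonoid M] {X Y : Set G}
    (h : IsTiling X Y) (φ : G → M) :
    ∑ g, φ g = ∑ x ∈ X.toFinset, ∑ y ∈ Y.toFinset, φ (x * y) := by
  rw [← sum_product']
  symm
  refine sum_bij (fun p _ => p.1 * p.2) (fun _ _ => mem_univ _) ?_ ?_ (fun _ _ => rfl)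
  · rintro p hp q hq hpq
    simp only [mem_product, Set.mem_toFinset] at hp hq
    exact (h _).unique ⟨hp.1, hp.2, rfl⟩ ⟨hq.1, hq.2, hpq.symm⟩
  · intro g _
    obtain ⟨p, ⟨hx, hy, hg⟩, -⟩ := h g
    exact ⟨p, by simpa [mem_product] using ⟨hx, hy⟩, hg⟩

theorem Equiv.swap_eq_swap_iff {α : Type*} [DecidableEq α] {a b c d : α} (hab : a ≠ b) :
    swap c d = swap a b ↔ (c = a ∧ d = b) ∨ (c = b ∧ d = a) := by
  refine ⟨fun h => ?_, ?_⟩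
  · have hc := congrArg (· c) h
    have hd := congrArg (· d) h
    have ha := congrArg (· a) h
    simp only [swap_apply_left, swap_apply_right] at hc hd ha
    grind
  · rintro (⟨rfl, rfl⟩ | ⟨rfl, rfl⟩)
    · rfl
    · exact swap_comm _ _

theorem swap_mem_transpositionsWithId {n : ℕ} (a b : Fin n) :
    swap a b ∈ transpositionsWithId n := by
  by_cases hab : a = b
  · left
    simp [hab, Perm.one_def]
  · right
    exact ⟨a, b, hab, rfl⟩

theorem card_filter_swap_eq {n : ℕ} (t : Perm (Fin n)) :
    (#{p : Fin n × Fin n | swap p.1 p.2 = t} : ℝ) =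
      (if t = 1 then (n : ℝ) - 2 else 0) + if t ∈ transpositionsWithId n then 2 else 0 := by
  rcases eq_or_ne t 1 with rfl | ht1
  · have : ({p : Fin n × Fin n | swap p.1 p.2 = 1} : Finset _) = univ.diag := by
      ext p
      simp [swap_eq_one_iff]
    rw [this, diag_card, card_univ, Fintype.card_fin]
    simp [transpositionsWithId]
  by_cases hT : t ∈ transpositionsWithId n
  · obtain ⟨a, b, hab, rfl⟩ : t.IsSwap := hT.resolve_left ht1
    have : ({p : Fin n × Fin n | swap p.1 p.2 = swap a b} : Finset _) = {(a, b), (b, a)} := by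
      ext ⟨c, d⟩
      simp [swap_eq_swap_iff hab]
    rw [this, card_pair (by simp [hab])]
    simp [ht1, hT]
  · have : ({p : Fin n × Fin n | swap p.1 p.2 = t} : Finset _) = ∅ := by
      ext p
      simpa using fun h : swap p.1 p.2 = t => hT (h ▸ swap_mem_transpositionsWithId p.1 p.2)
    simp [this, ht1, hT]

theorem sum_sum_swap_eq {n : ℕ} (F : Perm (Fin n) → ℝ) :
    ∑ a, ∑ b, F (swap a b) =
      (n - 2) * F 1 + 2 * ∑ t ∈ (transpositionsWithId n).toFinset, F t := by
  rw [← Fintype.sum_prod_type', ← sum_fiberwise' univ (fun p : Fin n × Fin n => swap p.1 p.2) F]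
  simp only [sum_const, nsmul_eq_mul, card_filter_swap_eq, add_mul, sum_add_distrib, ite_mul,
    zero_mul, sum_ite_eq', mem_univ, if_true, mul_sum, ← sum_filter]
  simp [Set.filter_mem_univ_eq_toFinset]

theorem sum_mul_sum_fiber_nonneg {β γ : Type*} [DecidableEq γ] (s : Finset β) (φ : β → γ)
    (g : β → ℝ) : 0 ≤ ∑ p ∈ s, g p * ∑ q ∈ s with φ q = φ p, g q := by
  set H := fun z => ∑ q ∈ s with φ q = z, g q
  calc 0 ≤ ∑ z ∈ s.image φ, H z * H z := sum_nonneg fun z _ => mul_self_nonneg _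
    _ = ∑ z ∈ s.image φ, ∑ p ∈ s with φ p = z, g p * H (φ p) :=
      sum_congr rfl fun z _ => by
        rw [sum_mul]
        exact sum_congr rfl fun p hp => by rw [(mem_filter.1 hp).2]
    _ = _ := sum_fiberwise_of_maps_to (fun p hp => mem_image_of_mem φ hp) _

theorem Function.update_eq_update_iff {α ι : Type*} [DecidableEq α] {d d' : α → ι} {b b' : α}
    {i j : ι} (hij : i ≠ j) (hb : d b = j) (hb' : d' b' = j) :
    update d' b' i = update d b i ↔ (d' = d ∧ b' = b) ∨ (d b' = i ∧ d' = d ∘ Equiv.swap b' b) := by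
  constructor
  · intro h
    by_cases hbb : b' = b
    · subst hbb
      refine Or.inl ⟨funext fun x => ?_, rfl⟩
      have := congrFun h x
      by_cases hx : x = b' <;> simp_all
    · have h1 := congrFun h b'
      have h2 := congrFun h b
      simp only [update_self, ne_eq, hbb, not_false_eq_true, update_of_ne, Ne.symm hbb] at h1 h2
      refine Or.inr ⟨h1.symm, funext fun x => ?_⟩
      have := congrFun h x
      by_cases hx : x = b' <;> by_cases hx' : x = b <;> simp_all [swap_apply_of_ne_of_ne]
  · rintro (⟨rfl, rfl⟩ | ⟨hi, rfl⟩)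
    · rfl
    · funext x
      by_cases hx : x = b' <;> by_cases hx' : x = b <;> simp_all [swap_apply_of_ne_of_ne]

section Colorings

variable {α ι : Type*} [Fintype α] [DecidableEq ι]

theorem card_fiber_comp_perm (d : α → ι) (g : Perm α) (i : ι) :
    #{x | (d ∘ g) x = i} = #{x | d x = i} :=
  card_equiv g (by simp)

theorem exists_perm_comp_eq {d d' : α → ι} (h : ∀ i, #{x | d x = i} = #{x | d' x = i}) :
    ∃ g : Perm α, d ∘ g = d' := by
  have e : ∀ i, {x // d' x = i} ≃ {x // d x = i} := fun i =>
    Fintype.equivOfCardEq (by simp only [Fintype.card_subtype, h])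
  refine ⟨(sigmaFiberEquiv d').symm.trans ((sigmaCongrRight e).trans (sigmaFiberEquiv d)), ?_⟩
  funext x
  exact (e (d' x) ⟨x, rfl⟩).2

variable [DecidableEq α]

theorem image_fiber_eq_iff {c d : α → ι} (y : Perm α) :
    (∀ i, ({x | c x = i} : Finset α).image y = ({x | d x = i} : Finset α)) ↔ d ∘ y = c := by
  constructor
  · intro h
    funext x
    have hx : y x ∈ ({x' | d x' = c x} : Finset α) := by
      rw [← h (c x)]
      exact mem_image_of_mem y (by simp)
    simpa using hx
  · rintro rfl i
    ext z
    simp only [mem_image, mem_filter, mem_univ, true_and, Function.comp_apply]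
    exact ⟨fun ⟨x, hx, hxz⟩ => hxz ▸ hx, fun hz => ⟨y.symm z, by simpa using hz, by simp⟩⟩

variable [Fintype ι] {lam : ι → ℕ}

/-- Ordered set partitions of shape `lam`, encoded by their block maps: `P_i = d⁻¹(i)`. -/
noncomputable def coloringsOfShape (lam : ι → ℕ) : Finset (α → ι) :=
  {d | ∀ i, #{x | d x = i} = lam i}

@[simp]
theorem mem_coloringsOfShape {d : α → ι} :
    d ∈ coloringsOfShape lam ↔ ∀ i, #{x | d x = i} = lam i := by
  simp [coloringsOfShape]

theorem comp_perm_mem_coloringsOfShape {d : α → ι} (g : Perm α) :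
    d ∘ g ∈ coloringsOfShape lam ↔ d ∈ coloringsOfShape lam := by
  simp only [mem_coloringsOfShape, card_fiber_comp_perm]

theorem exists_perm_comp_eq_of_mem {d d' : α → ι} (hd : d ∈ coloringsOfShape lam)
    (hd' : d' ∈ coloringsOfShape lam) : ∃ g : Perm α, d ∘ g = d' := by
  rw [mem_coloringsOfShape] at hd hd'
  exact exists_perm_comp_eq fun i => (hd i).trans (hd' i).symm

theorem card_perm_comp_eq_of_mem {c d d' : α → ι} (hd : d ∈ coloringsOfShape lam)
    (hd' : d' ∈ coloringsOfShape lam) :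
    #{g : Perm α | d' ∘ g = c} = #{g : Perm α | d ∘ g = c} := by
  obtain ⟨h, rfl⟩ := exists_perm_comp_eq_of_mem hd hd'
  exact card_equiv (Equiv.mulLeft h) (by simp [Perm.coe_mul, Function.comp_assoc])

theorem exists_mem_coloringsOfShape_eq_fiber {P : ι → Finset α} (hP : ∀ i, #(P i) = lam i)
    (hdisj : ∀ i j, i ≠ j → Disjoint (P i) (P j)) (hcov : univ.biUnion P = univ) :
    ∃ c ∈ coloringsOfShape lam, P = fun i => ({x | c x = i} : Finset α) := by
  have hmem : ∀ x, ∃ i, x ∈ P i := fun x => by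
    simpa using hcov.ge (mem_univ x)
  choose c hc using hmem
  have hP' : P = fun i => ({x | c x = i} : Finset α) := by
    refine funext fun i => Finset.ext fun x => ?_
    simp only [mem_filter, mem_univ, true_and]
    refine ⟨fun hx => ?_, fun hx => hx ▸ hc x⟩
    by_contra h
    exact disjoint_left.mp (hdisj _ _ h) (hc x) hx
  subst hP'
  exact ⟨c, mem_coloringsOfShape.mpr hP, rfl⟩

theorem sum_card_fiber_mul_sq {G : (α → ι) → ℝ} (hG : ∀ d ∉ coloringsOfShape lam, G d = 0)
    (f : ℕ → ℝ) (j : ι) : ∑ d, f #{a | d a = j} * G d ^ 2 = f (lam j) * ∑ d, G d ^ 2 := by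
  rw [mul_sum]
  refine sum_congr rfl fun d _ => ?_
  by_cases hd : d ∈ coloringsOfShape lam
  · rw [mem_coloringsOfShape.mp hd j]
  · simp [hG d hd]

end Colorings

section BlockSwapForm

variable {α ι : Type*} [Fintype α] [DecidableEq α] [Fintype ι] [DecidableEq ι]

noncomputable def blockSwapForm (G : (α → ι) → ℝ) (i j : ι) : ℝ :=
  ∑ d, ∑ a ∈ {a | d a = i}, ∑ b ∈ {b | d b = j}, G d * G (d ∘ swap a b)

theorem sum_blockSwapForm (G : (α → ι) → ℝ) :
    ∑ i, ∑ j, blockSwapForm G i j = ∑ d, ∑ a, ∑ b, G d * G (d ∘ swap a b) := by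
  calc ∑ i, ∑ j, blockSwapForm G i j
      = ∑ d, ∑ i, ∑ j, ∑ a ∈ {a | d a = i}, ∑ b ∈ {b | d b = j}, G d * G (d ∘ swap a b) := by
        simp only [blockSwapForm]
        symm
        rw [sum_comm]
        exact sum_congr rfl fun _ _ => sum_comm
    _ = _ := by
        refine sum_congr rfl fun d _ => ?_
        rw [← sum_fiberwise univ d]
        refine sum_congr rfl fun i _ => ?_
        rw [sum_comm]
        exact sum_congr rfl fun a _ => sum_fiberwise univ d _

theorem blockSwapForm_comm (G : (α → ι) → ℝ) (i j : ι) :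
    blockSwapForm G i j = blockSwapForm G j i :=
  sum_congr rfl fun d _ => by
    rw [sum_comm]
    simp only [swap_comm]

theorem blockSwapForm_self (G : (α → ι) → ℝ) (i : ι) :
    blockSwapForm G i i = ∑ d, (#{a | d a = i} : ℝ) ^ 2 * G d ^ 2 := by
  refine sum_congr rfl fun d _ => ?_
  have hfix : ∀ a ∈ ({a | d a = i} : Finset α), ∀ b ∈ ({a | d a = i} : Finset α),
      d ∘ swap a b = d := by
    intro a ha b hb
    simp only [mem_filter, mem_univ, true_and] at ha hb
    exact funext (apply_swap_eq_self (ha.trans hb.symm))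
  calc _ = ∑ a ∈ ({a | d a = i} : Finset α), ∑ b ∈ ({a | d a = i} : Finset α), G d * G d :=
        sum_congr rfl fun a ha => sum_congr rfl fun b hb => by rw [hfix a ha b hb]
    _ = _ := by
      simp only [sum_const, nsmul_eq_mul]
      ring

theorem filter_update_eq_update {i j : ι} (hij : i ≠ j) {d : α → ι} {b : α} (hb : d b = j) :
    ({q : (α → ι) × α | q.1 q.2 = j ∧ Function.update q.1 q.2 i = Function.update d b i} :
        Finset _) =
      insert (d, b) (({a | d a = i} : Finset α).image fun a => (d ∘ swap a b, a)) := by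
  ext ⟨d', b'⟩
  simp only [mem_filter, mem_univ, true_and, mem_insert, mem_image, Prod.mk.injEq]
  constructor
  · rintro ⟨hb', h⟩
    rcases (Function.update_eq_update_iff hij hb hb').mp h with h | ⟨hi, rfl⟩
    · exact Or.inl h
    · exact Or.inr ⟨b', hi, rfl, rfl⟩
  · rintro (⟨rfl, rfl⟩ | ⟨a, hi, rfl, rfl⟩)
    · exact ⟨hb, rfl⟩
    · have ha : (d ∘ swap a b) a = j := by simp [hb]
      exact ⟨ha, (Function.update_eq_update_iff hij hb ha).mpr (Or.inr ⟨hi, rfl⟩)⟩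

/-- Expand `0 ≤ ∑ (sum of G over a fibre)²` for `(d, b) ↦ update d b i` on the pairs with
`d b = j`: the fibre through `(d, b)` is `(d, b)` together with the `(d ∘ swap a b, a)`, `d a = i`. -/
theorem neg_le_blockSwapForm (G : (α → ι) → ℝ) {i j : ι} (hij : i ≠ j) :
    -∑ d, #{b | d b = j} * G d ^ 2 ≤ blockSwapForm G i j := by
  set X : Finset ((α → ι) × α) := {q | q.1 q.2 = j}
  have hfibre : ∀ d b, d b = j →
      ∑ q ∈ X with Function.update q.1 q.2 i = Function.update d b i, G q.1 =
        G d + ∑ a ∈ {a | d a = i}, G (d ∘ swap a b) := by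
    intro d b hb
    rw [filter_filter, filter_update_eq_update hij hb, sum_insert, sum_image]
    · exact fun a _ a' _ h => congrArg Prod.snd h
    · simp only [mem_image, mem_filter, mem_univ, true_and, Prod.mk.injEq, not_exists, not_and]
      rintro a hi - rfl
      exact hij (hi.symm.trans hb)
  have key := sum_mul_sum_fiber_nonneg X (fun q => Function.update q.1 q.2 i) (fun q => G q.1)
  have hX : ∑ q ∈ X, G q.1 *
      ∑ q' ∈ X with Function.update q'.1 q'.2 i = Function.update q.1 q.2 i, G q'.1 =
      ∑ d, ∑ b ∈ {b | d b = j}, G d * (G d + ∑ a ∈ {a | d a = i}, G (d ∘ swap a b)) := by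
    rw [sum_filter, Fintype.sum_prod_type]
    refine sum_congr rfl fun d _ => ?_
    rw [sum_filter]
    refine sum_congr rfl fun b _ => ?_
    split_ifs with hb
    · rw [hfibre d b hb]
    · rfl
  rw [hX] at key
  simp only [mul_add, sum_add_distrib, sum_const, nsmul_eq_mul, mul_sum, ← sq] at key
  rw [blockSwapForm, sum_congr rfl fun d _ => sum_comm]
  linarith

end BlockSwapForm

section Content

variable {l : ℕ} {lam : Fin l → ℕ}

noncomputable def blockWeight (lam : Fin l → ℕ) (i j : Fin l) : ℝ :=
  (if i = j then (lam i : ℝ) ^ 2 else 0) - (if j < i then (lam i : ℝ) else 0) -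
    (if i < j then (lam j : ℝ) else 0)

theorem sum_blockWeight (lam : Fin l → ℕ) :
    ∑ i, ∑ j, blockWeight lam i j = ∑ i : Fin l, (lam i : ℝ) * (lam i - 2 * (i : ℕ)) := by
  have lower : ∀ i : Fin l, ∑ j : Fin l, (if j < i then (lam i : ℝ) else 0) = (i : ℕ) * lam i := by
    intro i
    rw [← sum_filter, sum_const, filter_gt_eq_Iio, Fin.card_Iio, nsmul_eq_mul]
  simp only [blockWeight, sum_sub_distrib, sum_ite_eq, mem_univ, if_true, lower]
  rw [sum_comm (f := fun i j => if i < j then (lam j : ℝ) else 0)]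
  simp only [lower, ← sum_sub_distrib]
  exact sum_congr rfl fun i _ => by ring

variable {α : Type*} [Fintype α] [DecidableEq α] {G : (α → Fin l) → ℝ}

theorem blockWeight_mul_le_blockSwapForm (hG : ∀ d ∉ coloringsOfShape lam, G d = 0)
    (i j : Fin l) : blockWeight lam i j * ∑ d, G d ^ 2 ≤ blockSwapForm G i j := by
  have hfib := sum_card_fiber_mul_sq hG
  rcases lt_trichotomy i j with h | rfl | h
  · simpa [blockWeight, h.ne, h.not_gt, h, hfib (fun k => (k : ℝ))]
      using neg_le_blockSwapForm G h.ne
  · simp [blockWeight, blockSwapForm_self, hfib (fun k => (k : ℝ) ^ 2)]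
  · rw [blockSwapForm_comm]
    simpa [blockWeight, h.ne', h.not_gt, h, hfib (fun k => (k : ℝ))]
      using neg_le_blockSwapForm G h.ne

theorem content_mul_le_sum_swap (hG : ∀ d ∉ coloringsOfShape lam, G d = 0) :
    (∑ i : Fin l, (lam i : ℝ) * (lam i - 2 * (i : ℕ))) * ∑ d, G d ^ 2 ≤
      ∑ d, ∑ a, ∑ b, G d * G (d ∘ swap a b) := by
  rw [← sum_blockSwapForm, ← sum_blockWeight, sum_mul]
  refine sum_le_sum fun i _ => ?_
  rw [sum_mul]
  exact sum_le_sum fun j _ => blockWeight_mul_le_blockSwapForm hG i j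

theorem eq_zero_of_sum_swap_eq_mul {μ : ℝ}
    (hμ : μ < ∑ i : Fin l, (lam i : ℝ) * (lam i - 2 * (i : ℕ)))
    (hG : ∀ d ∉ coloringsOfShape lam, G d = 0)
    (h : ∀ d ∈ coloringsOfShape lam, ∑ a, ∑ b, G (d ∘ swap a b) = μ * G d) (d : α → Fin l) :
    G d = 0 := by
  have hform : ∑ d, ∑ a, ∑ b, G d * G (d ∘ swap a b) = μ * ∑ d, G d ^ 2 := by
    rw [mul_sum]
    refine sum_congr rfl fun d _ => ?_
    by_cases hd : d ∈ coloringsOfShape lam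
    · simp only [← mul_sum, h d hd]
      ring
    · simp [hG d hd]
  have hsq : ∑ d, G d ^ 2 = 0 := by
    have hbound := content_mul_le_sum_swap hG
    have hnonneg : 0 ≤ ∑ d, G d ^ 2 := sum_nonneg fun d _ => sq_nonneg (G d)
    nlinarith
  exact pow_eq_zero_iff two_ne_zero |>.mp
    ((sum_eq_zero_iff_of_nonneg fun d _ => sq_nonneg (G d)).mp hsq d (mem_univ d))

theorem eq_of_sum_swap_eq {N : (α → Fin l) → ℝ} {K : ℝ}
    (hsum : ∑ i, lam i = Fintype.card α)
    (hcontent : 0 ≤ ∑ i : Fin l, (lam i : ℝ) * (lam i - 2 * ((i : ℕ) + 1) + 1))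
    (hN : ∀ d ∈ coloringsOfShape lam,
      ∑ a, ∑ b, N (d ∘ swap a b) = (Fintype.card α - 2) * N d + K)
    {d d' : α → Fin l} (hd : d ∈ coloringsOfShape lam) (hd' : d' ∈ coloringsOfShape lam) :
    N d = N d' := by
  generalize hn : (Fintype.card α : ℝ) = n at hN
  have hden : 0 < n ^ 2 - n + 2 := by nlinarith [sq_nonneg (n - 1)]
  -- `r` is the value of `N` for which the constant function solves `hN`.
  obtain ⟨r, hK⟩ : ∃ r, K = (n ^ 2 - n + 2) * r := ⟨K / _, (mul_div_cancel₀ K hden.ne').symm⟩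
  obtain ⟨G, hG⟩ : ∃ G : (α → Fin l) → ℝ,
      ∀ d, G d = if d ∈ coloringsOfShape lam then N d - r else 0 := ⟨_, fun _ => rfl⟩
  have hμ : n - 2 < ∑ i : Fin l, (lam i : ℝ) * (lam i - 2 * (i : ℕ)) := by
    have hlam : ∑ i, (lam i : ℝ) = n := by rw [← hn, ← Nat.cast_sum, hsum]
    have : ∑ i : Fin l, (lam i : ℝ) * (lam i - 2 * (i : ℕ)) =
        ∑ i : Fin l, (lam i : ℝ) * (lam i - 2 * ((i : ℕ) + 1) + 1) + ∑ i, (lam i : ℝ) := by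
      rw [← sum_add_distrib]
      exact sum_congr rfl fun i _ => by ring
    linarith
  have hGswap : ∀ d ∈ coloringsOfShape lam, ∑ a, ∑ b, G (d ∘ swap a b) = (n - 2) * G d := by
    intro d hd
    simp only [hG, comp_perm_mem_coloringsOfShape, hd, if_true, sum_sub_distrib, hN d hd,
      sum_const, card_univ, nsmul_eq_mul, hn, hK]
    ring
  have hG0 := eq_zero_of_sum_swap_eq_mul hμ (fun d hd => by rw [hG, if_neg hd]) hGswap
  have h := hG0 d
  have h' := hG0 d'
  rw [hG, if_pos hd, sub_eq_zero] at h
  rw [hG, if_pos hd', sub_eq_zero] at h'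
  rw [h, h']

end Content

section TransportCount

variable {α ι : Type*} [Fintype α] [DecidableEq α] [DecidableEq ι]

noncomputable def transportCount (Y : Set (Perm α)) (c d : α → ι) : ℕ :=
  #{y | y ∈ Y ∧ d ∘ y = c}

theorem ncard_image_fiber_eq (Y : Set (Perm α)) (c d : α → ι) :
    {y ∈ Y | ∀ i, ({x | c x = i} : Finset α).image y = ({x | d x = i} : Finset α)}.ncard =
      transportCount Y c d := by
  rw [transportCount, ← Set.ncard_coe_finset]
  congr 1
  ext y
  simp only [image_fiber_eq_iff, coe_filter, mem_univ, true_and]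

theorem sum_transportCount [Fintype ι] {lam : ι → ℕ} {c : α → ι}
    (hc : c ∈ coloringsOfShape lam) (Y : Set (Perm α)) :
    ∑ d ∈ coloringsOfShape lam, transportCount Y c d = #{y | y ∈ Y} := by
  rw [card_eq_sum_card_fiberwise (f := fun y : Perm α => c ∘ ⇑y⁻¹)
    (fun y _ => (comp_perm_mem_coloringsOfShape _).mpr hc)]
  refine sum_congr rfl fun d _ => ?_
  rw [transportCount, filter_filter]
  refine congrArg card (filter_congr fun y _ => and_congr_right fun _ => ?_)
  rw [Perm.inv_def, comp_symm_eq, eq_comm]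

end TransportCount

section Tiling

variable {n l : ℕ} {Y : Set (Perm (Fin n))}

theorem sum_transportCount_comp_eq_of_tiling {ι : Type*} [Fintype ι] [DecidableEq ι]
    {lam : ι → ℕ} (hT : IsTiling (transpositionsWithId n) Y) {c d : Fin n → ι}
    (hc : c ∈ coloringsOfShape lam) (hd : d ∈ coloringsOfShape lam) :
    ∑ t ∈ (transpositionsWithId n).toFinset, transportCount Y c (d ∘ t) =
      #{g : Perm (Fin n) | c ∘ g = c} := by
  rw [← card_perm_comp_eq_of_mem (c := c) hc hd, card_eq_sum_ones, sum_filter, hT.sum_eq]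
  refine sum_congr rfl fun t _ => ?_
  rw [transportCount, ← filter_filter, Set.filter_mem_univ_eq_toFinset, card_filter]
  rfl

variable {lam : Fin l → ℕ}

theorem transportCount_eq_of_tiling (hT : IsTiling (transpositionsWithId n) Y)
    (hsum : ∑ i, lam i = n)
    (hcontent : 0 ≤ ∑ i : Fin l, (lam i : ℝ) * (lam i - 2 * ((i : ℕ) + 1) + 1))
    {c d d' : Fin n → Fin l} (hc : c ∈ coloringsOfShape lam)
    (hd : d ∈ coloringsOfShape lam) (hd' : d' ∈ coloringsOfShape lam) :
    transportCount Y c d = transportCount Y c d' := by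
  have key := eq_of_sum_swap_eq (N := fun d => (transportCount Y c d : ℝ))
    (K := 2 * #{g : Perm (Fin n) | c ∘ g = c}) (by rw [Fintype.card_fin, hsum]) hcontent
    (fun e he => ?_) hd hd'
  · exact_mod_cast key
  rw [sum_sum_swap_eq (fun t => (transportCount Y c (e ∘ t) : ℝ)), Fintype.card_fin,
    ← Nat.cast_sum, sum_transportCount_comp_eq_of_tiling hT hc he, Perm.coe_one,
    Function.comp_id]

theorem card_mul_transportCount_of_tiling (hT : IsTiling (transpositionsWithId n) Y)
    (hsum : ∑ i, lam i = n)
    (hcontent : 0 ≤ ∑ i : Fin l, (lam i : ℝ) * (lam i - 2 * ((i : ℕ) + 1) + 1))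
    {c d : Fin n → Fin l} (hc : c ∈ coloringsOfShape lam)
    (hd : d ∈ coloringsOfShape lam) :
    #(coloringsOfShape lam : Finset (Fin n → Fin l)) * transportCount Y c d = #{y | y ∈ Y} := by
  rw [← sum_transportCount hc Y]
  exact (sum_const_nat fun d' hd' =>
    transportCount_eq_of_tiling hT hsum hcontent hc hd' hd).symm

theorem transportCount_pos_of_tiling (hT : IsTiling (transpositionsWithId n) Y)
    (hsum : ∑ i, lam i = n)
    (hcontent : 0 ≤ ∑ i : Fin l, (lam i : ℝ) * (lam i - 2 * ((i : ℕ) + 1) + 1))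
    {c d : Fin n → Fin l} (hc : c ∈ coloringsOfShape lam)
    (hd : d ∈ coloringsOfShape lam) : 0 < transportCount Y c d := by
  have hY : 0 < #{y | y ∈ Y} := by
    obtain ⟨y, hy⟩ := hT.nonempty_right
    exact card_pos.mpr ⟨y, by simpa using hy⟩
  rw [← card_mul_transportCount_of_tiling hT hsum hcontent hc hd] at hY
  exact pos_of_mul_pos_right hY (Nat.zero_le _)

theorem transportCount_eq_transportCount_of_tiling (hT : IsTiling (transpositionsWithId n) Y)
    (hsum : ∑ i, lam i = n)
    (hcontent : 0 ≤ ∑ i : Fin l, (lam i : ℝ) * (lam i - 2 * ((i : ℕ) + 1) + 1))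
    {c d c' d' : Fin n → Fin l}
    (hc : c ∈ coloringsOfShape lam) (hd : d ∈ coloringsOfShape lam)
    (hc' : c' ∈ coloringsOfShape lam) (hd' : d' ∈ coloringsOfShape lam) :
    transportCount Y c d = transportCount Y c' d' :=
  Nat.eq_of_mul_eq_mul_left (card_pos.mpr ⟨c, hc⟩)
    ((card_mul_transportCount_of_tiling hT hsum hcontent hc hd).trans
      (card_mul_transportCount_of_tiling hT hsum hcontent hc' hd').symm)

end Tiling

theorem lambda_transitive_of_tiling_general (n : ℕ)
    (Y : Set (Equiv.Perm (Fin n))) (hT : IsTiling (transpositionsWithId n) Y)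
    (l : ℕ) (lam : Fin l → ℕ)
    (hsum : ∑ i, lam i = n)
    (hcontent : 0 ≤ ∑ i : Fin l,
      (lam i : ℤ) * ((lam i : ℤ) - 2 * (((i : ℕ) : ℤ) + 1) + 1)) :
    ∃ r : ℕ, 0 < r ∧
      ∀ P Q : Fin l → Finset (Fin n),
        (∀ i, (P i).card = lam i) → (∀ i, (Q i).card = lam i) →
        (∀ i j, i ≠ j → Disjoint (P i) (P j)) →
        (∀ i j, i ≠ j → Disjoint (Q i) (Q j)) →
        Finset.univ.biUnion P = Finset.univ →
        Finset.univ.biUnion Q = Finset.univ →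
        {y ∈ Y | ∀ i, (P i).image (⇑y) = Q i}.ncard = r := by
  have hcontentℝ : 0 ≤ ∑ i : Fin l, (lam i : ℝ) * (lam i - 2 * ((i : ℕ) + 1) + 1) := by
    exact_mod_cast hcontent
  by_cases hS : (coloringsOfShape lam : Finset (Fin n → Fin l)).Nonempty
  · obtain ⟨c₀, hc₀⟩ := hS
    refine ⟨transportCount Y c₀ c₀, transportCount_pos_of_tiling hT hsum hcontentℝ hc₀ hc₀,
      fun P Q hP hQ hPd hQd hPc hQc => ?_⟩
    obtain ⟨c, hc, rfl⟩ := exists_mem_coloringsOfShape_eq_fiber hP hPd hPc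
    obtain ⟨d, hd, rfl⟩ := exists_mem_coloringsOfShape_eq_fiber hQ hQd hQc
    rw [ncard_image_fiber_eq]
    exact transportCount_eq_transportCount_of_tiling hT hsum hcontentℝ hc hd hc₀ hc₀
  · refine ⟨1, one_pos, fun P Q hP _ hPd _ hPc _ => ?_⟩
    obtain ⟨c, hc, -⟩ := exists_mem_coloringsOfShape_eq_fiber hP hPd hPc
    exact (hS ⟨c, hc⟩).elim

theorem lambda_transitive_of_tiling (n : ℕ) (hn : 2 ≤ n)
    (Y : Set (Equiv.Perm (Fin n))) (hT : IsTiling (transpositionsWithId n) Y)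
    (l : ℕ) (lam : Fin l → ℕ)
    (hmono : ∀ i j : Fin l, i ≤ j → lam j ≤ lam i)
    (hpos : ∀ i, 0 < lam i)
    (hsum : ∑ i, lam i = n)
    (hcontent : 0 ≤ ∑ i : Fin l,
      (lam i : ℤ) * ((lam i : ℤ) - 2 * (((i : ℕ) : ℤ) + 1) + 1)) :
    ∃ r : ℕ, 0 < r ∧
      ∀ P Q : Fin l → Finset (Fin n),
        (∀ i, (P i).card = lam i) → (∀ i, (Q i).card = lam i) →
        (∀ i j, i ≠ j → Disjoint (P i) (P j)) →
        (∀ i j, i ≠ j → Disjoint (Q i) (Q j)) →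
        Finset.univ.biUnion P = Finset.univ →
        Finset.univ.biUnion Q = Finset.univ →
        {y ∈ Y | ∀ i, (P i).image (⇑y) = Q i}.ncard = r :=
  lambda_transitive_of_tiling_general n Y hT l lam hsum hcontent
end

section
/- Let n ≥ 2 and suppose (T_n*, Y) is a tiling of the symmetric group S_n, where T_n* is the set of all transpositions in S_n. Then for every partition λ = (λ_1,…,λ_ℓ) of n satisfying ∑_{i=1}^{ℓ} λ_i(λ_i − 2i + 1) > 0 (equivalently, the content sum of the Young diagram of λ is positive), the set Y is λ-transitive. -/
/-- `T_n^*`: the set of all transpositions in the symmetric group `S_n`. -/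
def transpositions (n : ℕ) : Set (Equiv.Perm (Fin n)) :=
  {σ : Equiv.Perm (Fin n) | σ.IsSwap}

/-!
Encode an ordered set partition of shape `λ` as a colouring `c : Fin n → Fin l` whose fibres
have sizes `λ`; these colourings form a single `S_n`-orbit `Ω`. Fix `p ∈ Ω` and let
`z(r) = |Ω| · #{y ∈ Y | y • p = r} - |Y|` on `Ω`. Because `(t, y) ↦ t * y` is a bijection
`T × Y ≃ S_n`, for every `r ∈ Ω` we get
`∑_{t ∈ T} z(t • r) = |Ω| · #{g | g • p = r} - |T| |Y| = n! - n! = 0`,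
so `∑_r ∑_t z(r) z(t • r) = 0`.

On the other hand this quadratic form is at least `(∑ λ_i (λ_i - 2i + 1) / 2) ∑_r z(r)²`. Sort the
ordered pairs of points `(x, y)` by their colours `(a, b)`: pairs of equal colour fix `r`, and for
`a ≠ b` expanding `0 ≤ ∑_{c'} (∑_{c' y = b} z(c'[y ↦ a]))²` bounds the cross terms below by
`-λ_a ∑ z²`; using this with the larger of the two colours yields the content sum. A positive
content sum therefore forces `z = 0`, i.e. `#{y ∈ Y | y • p = r} = |Y| / |Ω|` for all `p, r ∈ Ω`.
-/

open Finset MulAction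
open Equiv (Perm swap)

section Tiling

variable {G α : Type*} [Group G] [Fintype G] [MulAction G α] [DecidableEq α] {X Y : Finset G}

theorem IsTiling.card_filter_eq_card_filter_product (h : IsTiling (X : Set G) Y) (φ : G → Prop)
    [DecidablePred φ] :
    #{g | φ g} = #{p ∈ X ×ˢ Y | φ (p.1 * p.2)} := by
  symm
  apply card_bij (fun p _ => p.1 * p.2)
  · intro p hp
    simpa using (mem_filter.1 hp).2
  · intro p hp p' hp' hpp'
    simp only [mem_filter, mem_product] at hp hp'
    obtain ⟨u, -, hu⟩ := h (p.1 * p.2)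
    rw [hu p ⟨hp.1.1, hp.1.2, rfl⟩, hu p' ⟨hp'.1.1, hp'.1.2, hpp'.symm⟩]
  · intro g hg
    obtain ⟨p, ⟨hpX, hpY, rfl⟩, -⟩ := h g
    exact ⟨p, mem_filter.2 ⟨mem_product.2 ⟨hpX, hpY⟩, (mem_filter.1 hg).2⟩, rfl⟩

theorem IsTiling.card_mul_card (h : IsTiling (X : Set G) Y) : #X * #Y = Fintype.card G := by
  simpa [card_product] using (h.card_filter_eq_card_filter_product fun _ => True).symm

theorem IsTiling.card_smul_eq_sum (h : IsTiling (X : Set G) Y) (p q : α) :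
    #{g : G | g • p = q} = ∑ x ∈ X, #{y ∈ Y | y • p = x⁻¹ • q} := by
  rw [h.card_filter_eq_card_filter_product, card_filter, sum_product]
  simp_rw [card_filter, mul_smul, eq_inv_smul_iff]

theorem card_filter_smul_eq_of_mem_orbit {p q q' : α} (hq : q ∈ orbit G p) (hq' : q' ∈ orbit G p) :
    #{g : G | g • p = q} = #{g : G | g • p = q'} := by
  obtain ⟨σ, rfl⟩ := hq
  obtain ⟨τ, rfl⟩ := hq'
  apply card_nbij' (τ * σ⁻¹ * ·) (σ * τ⁻¹ * ·) <;> intro g hg <;>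
    simp_all [mul_smul, mul_assoc]

theorem ncard_orbit_mul_card_filter_smul {p q : α} (hq : q ∈ orbit G p) :
    (orbit G p).ncard * #{g : G | g • p = q} = Fintype.card G := by
  have horbit : orbit G p = ↑(univ.image (· • p : G → α)) := by
    ext; simp [mem_orbit_iff]
  rw [horbit, Set.ncard_coe_finset, ← card_univ, card_eq_sum_card_image (· • p) univ]
  refine (sum_const_nat fun q' hq' => card_filter_smul_eq_of_mem_orbit ?_ hq).symm
  rw [horbit]
  exact mem_coe.2 hq'

theorem IsTiling.ncard_orbit_mul_card_eq (h : IsTiling (X : Set G) Y) {p q : α}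
    (hinj : ∀ z : α → ℝ, (∀ r ∉ orbit G p, z r = 0) → (∀ r, ∑ x ∈ X, z (x⁻¹ • r) = 0) → z = 0)
    (hq : q ∈ orbit G p) :
    (orbit G p).ncard * #{y ∈ Y | y • p = q} = #Y := by
  classical
  set z : α → ℝ := fun r =>
    if r ∈ orbit G p then (orbit G p).ncard * #{y ∈ Y | y • p = r} - #Y else 0
  have hz : z = 0 := by
    refine hinj z (fun r hr => if_neg hr) fun r => ?_
    by_cases hr : r ∈ orbit G p
    · have hxr : ∀ x : G, x⁻¹ • r ∈ orbit G p := fun x => mem_orbit_of_mem_orbit _ hr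
      simp only [z, hxr, if_true, sum_sub_distrib, ← mul_sum, sum_const, nsmul_eq_mul]
      rw [sub_eq_zero]
      exact_mod_cast (h.card_smul_eq_sum p r ▸ ncard_orbit_mul_card_filter_smul hr).trans
        h.card_mul_card.symm
    · have hxr : ∀ x : G, x⁻¹ • r ∉ orbit G p := fun x hx =>
        hr (by simpa using mem_orbit_of_mem_orbit x hx)
      simp [z, hxr]
  have hzq := congrFun hz q
  simp only [z, if_pos hq, Pi.zero_apply, sub_eq_zero] at hzq
  exact_mod_cast hzq

end Tiling

theorem card_filter_swap_eq_two {α : Type*} [Fintype α] [DecidableEq α] {t : Perm α}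
    (ht : t.IsSwap) : #{p ∈ univ.offDiag | swap p.1 p.2 = t} = 2 := by
  obtain ⟨a, b, hab, rfl⟩ := ht
  convert card_pair (show (a, b) ≠ (b, a) by simp [hab])
  ext ⟨x, y⟩
  simp only [mem_filter, mem_offDiag, mem_univ, true_and, mem_insert, mem_singleton, Prod.mk.injEq]
  constructor
  · rintro ⟨hxy, h⟩
    have hx : swap a b x ≠ x := by rw [← h, Equiv.swap_apply_left]; exact hxy.symm
    have hy : y = swap a b x := by rw [← h, Equiv.swap_apply_left]
    rw [Equiv.swap_apply_ne_self_iff] at hx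
    rcases hx.2 with rfl | rfl <;> simp [hy]
  · rintro (⟨rfl, rfl⟩ | ⟨rfl, rfl⟩)
    · exact ⟨hab, rfl⟩
    · exact ⟨hab.symm, Equiv.swap_comm _ _⟩

open scoped Classical in
theorem sum_sum_swap {α M : Type*} [Fintype α] [DecidableEq α] [AddCommMonoid M]
    (F : Perm α → M) :
    ∑ x, ∑ y, F (swap x y) = Fintype.card α • F 1 + 2 • ∑ t with t.IsSwap, F t := by
  rw [← Fintype.sum_prod_type', ← univ_product_univ, ← diag_union_offDiag,
    sum_union (disjoint_diag_offDiag _)]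
  congr 1
  · simp [diag, Equiv.Perm.one_def]
  · rw [← sum_fiberwise_of_maps_to (g := fun p : α × α => swap p.1 p.2) (t := {t | t.IsSwap}),
      smul_sum]
    · refine sum_congr rfl fun t ht => ?_
      rw [sum_congr rfl fun p hp => congrArg F (mem_filter.1 hp).2, sum_const,
        card_filter_swap_eq_two (mem_filter.1 ht).2]
    · intro p hp
      simp only [mem_filter, mem_univ, true_and]
      exact ⟨p.1, p.2, (mem_offDiag.1 hp).2.2, rfl⟩

theorem sum_sum_max {l : ℕ} (f : Fin l → ℝ) :
    ∑ a, ∑ b, f (max a b) = ∑ b : Fin l, (2 * (b : ℕ) + 1) * f b := by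
  induction l with
  | zero => simp
  | succ l ih =>
    have h1 (a b : Fin l) : max a.castSucc b.castSucc = (max a b).castSucc :=
      (Fin.castSuccOrderEmb.monotone.map_max).symm
    simp only [Fin.sum_univ_castSucc, h1, ih (fun b => f b.castSucc),
      max_eq_right (Fin.castSucc_lt_last _).le, max_eq_left (Fin.castSucc_lt_last _).le, max_self,
      sum_add_distrib, sum_const, card_univ, Fintype.card_fin, nsmul_eq_mul, Fin.val_castSucc,
      Fin.val_last]
    ring

section Coloring

attribute [local instance] arrowAction

variable {α ι : Type*}

theorem perm_smul_apply (g : Perm α) (c : α → ι) (x : α) : (g • c) x = c (g⁻¹ x) := rfl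

theorem swap_smul_eq_self [DecidableEq α] {c : α → ι} {x y : α} (h : c x = c y) :
    swap x y • c = c := by
  ext w
  rw [perm_smul_apply, Equiv.swap_inv]
  rcases eq_or_ne w x with rfl | hwx
  · rw [Equiv.swap_apply_left, h]
  rcases eq_or_ne w y with rfl | hwy
  · rw [Equiv.swap_apply_right, h]
  · rw [Equiv.swap_apply_of_ne_of_ne hwx hwy]

theorem update_update_eq_swap_smul [DecidableEq α] {c : α → ι} {x y : α} :
    Function.update (Function.update c x (c y)) y (c x) = swap x y • c := by
  ext w
  rw [perm_smul_apply, Equiv.swap_inv]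
  rcases eq_or_ne w y with rfl | hwy
  · simp
  rcases eq_or_ne w x with rfl | hwx
  · simp [hwy]
  · simp [Function.update_of_ne, hwx, hwy, Equiv.swap_apply_of_ne_of_ne]

variable [Fintype α] [DecidableEq ι]

def shape (c : α → ι) (i : ι) : ℕ := #{x | c x = i}

theorem eq_of_forall_filter_eq {c d : α → ι}
    (h : ∀ i, ({x | c x = i} : Finset α) = ({x | d x = i} : Finset α)) :
    c = d := by
  ext x
  simpa using congrArg (x ∈ ·) (h (d x))

variable [DecidableEq α]

theorem filter_perm_smul_eq_image (g : Perm α) (c : α → ι) (i : ι) :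
    ({x | (g • c) x = i} : Finset α) = Finset.image g {x | c x = i} := by
  ext x
  simp only [mem_filter, mem_univ, true_and, mem_image, perm_smul_apply]
  exact ⟨fun h => ⟨g⁻¹ x, h, by simp⟩, by rintro ⟨y, rfl, rfl⟩; simp⟩

theorem shape_perm_smul (g : Perm α) (c : α → ι) : shape (g • c) = shape c := by
  ext i
  rw [shape, filter_perm_smul_eq_image, card_image_of_injective _ g.injective, shape]

theorem mem_orbit_iff_shape_eq {c d : α → ι} :
    d ∈ orbit (Perm α) c ↔ shape d = shape c := by
  refine ⟨by rintro ⟨g, rfl⟩; exact shape_perm_smul g c, fun h => ?_⟩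
  have hcard (i : ι) : Fintype.card {x // c x = i} = Fintype.card {x // d x = i} := by
    simpa [Fintype.card_subtype, shape] using (congrFun h i).symm
  obtain ⟨σ, hσ⟩ : ∃ σ : Perm α, ∀ x, d (σ x) = c x :=
    ⟨_, Equiv.ofFiberEquiv_map fun i => Fintype.equivOfCardEq (hcard i)⟩
  refine ⟨σ, funext fun x => ?_⟩
  simpa [perm_smul_apply] using (hσ (σ⁻¹ x)).symm

theorem image_eq_iff_perm_smul_eq {P Q : ι → Finset α} {c d : α → ι}
    (hc : ∀ i, ({x | c x = i} : Finset α) = P i)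
    (hd : ∀ i, ({x | d x = i} : Finset α) = Q i) (g : Perm α) :
    (∀ i, (P i).image g = Q i) ↔ g • c = d := by
  simp_rw [← hc, ← hd, ← filter_perm_smul_eq_image]
  exact ⟨eq_of_forall_filter_eq, by rintro rfl _; rfl⟩

variable [Fintype ι]

def IsOrderedPartition (lam : ι → ℕ) (P : ι → Finset α) : Prop :=
  (∀ i, #(P i) = lam i) ∧ (∀ i j, i ≠ j → Disjoint (P i) (P j)) ∧ univ.biUnion P = univ

theorem IsOrderedPartition.exists_coloring {lam : ι → ℕ} {P : ι → Finset α}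
    (hP : IsOrderedPartition lam P) :
    ∃ c : α → ι, shape c = lam ∧ ∀ i, ({x | c x = i} : Finset α) = P i := by
  have hex (x : α) : ∃ i, x ∈ P i := by simpa using hP.2.2.ge (mem_univ x)
  choose c hc using hex
  have hfiber (i : ι) : ({x | c x = i} : Finset α) = P i := by
    refine ext fun x => ⟨fun hx => ?_, fun hx => ?_⟩
    · rw [← (mem_filter.1 hx).2]
      exact hc x
    · by_contra hne
      exact disjoint_left.1 (hP.2.1 _ _ fun h => hne (mem_filter.2 ⟨mem_univ x, h⟩)) (hc x) hx
  exact ⟨c, funext fun i => by rw [shape, hfiber, hP.1], hfiber⟩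

theorem sum_sum_filter_update {M : Type*} [AddCommMonoid M]
    (F : (α → ι) → α → M) (a b : ι) :
    ∑ c, ∑ x with c x = a, F (Function.update c x b) x = ∑ c, ∑ x with c x = b, F c x := by
  simp only [sum_filter, ← Fintype.sum_prod_type']
  have he : Function.Involutive
      fun p : (α → ι) × α => (Function.update p.1 p.2 (swap a b (p.1 p.2)), p.2) := fun p => by
    simp
  refine Fintype.sum_bijective _ he.bijective _ _ fun p => ?_
  by_cases h : p.1 p.2 = a
  · simp [h]
  · simp [h, Equiv.swap_apply_eq_iff]

def colorPairSum (z : (α → ι) → ℝ) (a b : ι) : ℝ :=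
  ∑ c, ∑ x with c x = a, ∑ y with c y = b, z c * z (swap x y • c)

theorem neg_sum_shape_mul_sq_le_colorPairSum (z : (α → ι) → ℝ) {a b : ι} (hab : a ≠ b) :
    -∑ c, (shape c a : ℝ) * z c ^ 2 ≤ colorPairSum z a b := by
  unfold colorPairSum
  open Function in
  have hsq : ∑ c, (∑ y with c y = b, z (update c y a)) ^ 2 =
      ∑ c, (shape c a : ℝ) * z c ^ 2 +
        ∑ c, ∑ x with c x = a, ∑ y with c y = b, z c * z (swap x y • c) := by
    calc _ = ∑ c, ∑ y with c y = b, ∑ y' with c y' = b, z (update c y a) * z (update c y' a) := by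
          simp_rw [sq, sum_mul_sum]
      _ = ∑ c, ∑ x with c x = a, ∑ y with update c x b y = b,
            z (update (update c x b) x a) * z (update (update c x b) y a) :=
          (sum_sum_filter_update (fun c y => ∑ y' with c y' = b,
            z (update c y a) * z (update c y' a)) a b).symm
      _ = ∑ c, ∑ x with c x = a, (z c ^ 2 + ∑ y with c y = b, z c * z (swap x y • c)) := by
          refine sum_congr rfl fun c _ => sum_congr rfl fun x hx => ?_
          have hcx : c x = a := (mem_filter.1 hx).2
          have hfilter :
              ({y | update c x b y = b} : Finset α) = insert x ({y | c y = b} : Finset α) := by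
            ext y
            rcases eq_or_ne y x with rfl | hyx <;> simp [*]
          have hback : update (update c x b) x a = c := by simp [← hcx]
          rw [hfilter, sum_insert (by simp [hcx, hab]), hback, sq]
          refine congrArg _ (sum_congr rfl fun y hy => ?_)
          rw [← hcx, ← (mem_filter.1 hy).2, update_update_eq_swap_smul]
      _ = _ := by simp [sum_add_distrib, shape]
  linarith [sum_nonneg fun c (_ : c ∈ univ) => sq_nonneg (∑ y with c y = b, z (update c y a))]

theorem colorPairSum_comm (z : (α → ι) → ℝ) (a b : ι) :
    colorPairSum z a b = colorPairSum z b a := by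
  refine sum_congr rfl fun c _ => ?_
  rw [sum_comm]
  simp_rw [Equiv.swap_comm]

theorem colorPairSum_self (z : (α → ι) → ℝ) (a : ι) :
    colorPairSum z a a = ∑ c, (shape c a : ℝ) ^ 2 * z c ^ 2 := by
  refine sum_congr rfl fun c _ => ?_
  rw [sum_congr rfl fun x hx => sum_congr rfl fun y hy => by
    rw [swap_smul_eq_self ((mem_filter.1 hx).2.trans (mem_filter.1 hy).2.symm)]]
  simp [shape]
  ring

theorem sum_sum_sum_swap_eq_sum_colorPairSum (z : (α → ι) → ℝ) :
    ∑ c, ∑ x : α, ∑ y : α, z c * z (swap x y • c) = ∑ a, ∑ b, colorPairSum z a b := by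
  have hsplit (c : α → ι) : ∑ x : α, ∑ y : α, z c * z (swap x y • c) =
      ∑ a, ∑ b, ∑ x with c x = a, ∑ y with c y = b, z c * z (swap x y • c) := by
    rw [← sum_fiberwise univ c]
    refine sum_congr rfl fun a _ => ?_
    exact (sum_congr rfl fun x _ =>
      (sum_fiberwise univ c fun y => z c * z (swap x y • c)).symm).trans sum_comm
  simp only [hsplit, colorPairSum]
  rw [sum_comm]
  exact sum_congr rfl fun a _ => sum_comm

-- Twice the sum of the contents `j - i` of the cells of the Young diagram of `f`; rows are
-- indexed from `0`, hence the `i + 1`.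
def twiceContentSum {l : ℕ} (f : Fin l → ℕ) : ℤ :=
  ∑ i, (f i : ℤ) * ((f i : ℤ) - 2 * (((i : ℕ) : ℤ) + 1) + 1)

theorem sum_sum_ite_sub_max_eq {l : ℕ} (f : Fin l → ℕ) :
    ∑ a, ∑ b, ((if a = b then (f a : ℝ) ^ 2 + f a else 0) - f (max a b)) =
      twiceContentSum f + ∑ a, (f a : ℝ) := by
  simp only [sum_sub_distrib, sum_ite_eq, mem_univ, if_true, sum_sum_max (fun b => (f b : ℝ)),
    twiceContentSum]
  push_cast
  rw [← sum_sub_distrib, ← sum_add_distrib]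
  exact sum_congr rfl fun _ _ => by ring

theorem colorPairSum_ge {l : ℕ} (z : (α → Fin l) → ℝ) (a b : Fin l) :
    ∑ c, ((if a = b then (shape c a : ℝ) ^ 2 + shape c a else 0) - shape c (max a b)) * z c ^ 2 ≤
      colorPairSum z a b := by
  rcases lt_trichotomy a b with hab | rfl | hab
  · simpa [hab.ne, max_eq_right hab.le, colorPairSum_comm z a b] using
      neg_sum_shape_mul_sq_le_colorPairSum z hab.ne'
  · simp [colorPairSum_self]
  · simpa [hab.ne', max_eq_left hab.le] using neg_sum_shape_mul_sq_le_colorPairSum z hab.ne'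

open scoped Classical in
theorem sum_twiceContentSum_mul_sq_le {l : ℕ} (z : (α → Fin l) → ℝ) :
    ∑ c, (twiceContentSum (shape c) : ℝ) * z c ^ 2 ≤
      2 * ∑ c, ∑ t : Perm α with t.IsSwap, z c * z (t • c) := by
  have hcard (c : α → Fin l) : ∑ a, (shape c a : ℝ) = Fintype.card α := by
    exact_mod_cast (card_eq_sum_card_fiberwise fun x (_ : x ∈ univ) => mem_univ (c x)).symm
  have hswap : ∑ c, ∑ x : α, ∑ y : α, z c * z (swap x y • c) =
      ∑ c, (Fintype.card α * z c ^ 2 + 2 * ∑ t : Perm α with t.IsSwap, z c * z (t • c)) := by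
    refine sum_congr rfl fun c _ => ?_
    rw [sum_sum_swap fun t => z c * z (t • c)]
    simp [sq]
  have hbound : ∑ c, ((twiceContentSum (shape c) : ℝ) + Fintype.card α) * z c ^ 2 ≤
      ∑ c, ∑ x : α, ∑ y : α, z c * z (swap x y • c) := by
    calc _ = ∑ c, ∑ a, ∑ b, ((if a = b then (shape c a : ℝ) ^ 2 + shape c a else 0) -
              shape c (max a b)) * z c ^ 2 := sum_congr rfl fun c _ => by
          rw [← hcard c, ← sum_sum_ite_sub_max_eq]
          simp_rw [sum_mul]
      _ = ∑ a, ∑ b, ∑ c, ((if a = b then (shape c a : ℝ) ^ 2 + shape c a else 0) -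
              shape c (max a b)) * z c ^ 2 := by
          rw [sum_comm]
          exact sum_congr rfl fun a _ => sum_comm
      _ ≤ ∑ a, ∑ b, colorPairSum z a b :=
          sum_le_sum fun a _ => sum_le_sum fun b _ => colorPairSum_ge z a b
      _ = _ := (sum_sum_sum_swap_eq_sum_colorPairSum z).symm
  rw [hswap] at hbound
  simp only [add_mul, sum_add_distrib, ← mul_sum] at hbound ⊢
  linarith

open scoped Classical in
theorem eq_zero_of_sum_isSwap_inv_smul_eq_zero {l : ℕ} {c₀ : α → Fin l}
    (hc₀ : 0 < twiceContentSum (shape c₀)) (z : (α → Fin l) → ℝ)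
    (hz : ∀ c ∉ orbit (Perm α) c₀, z c = 0)
    (h : ∀ c, ∑ t : Perm α with t.IsSwap, z (t⁻¹ • c) = 0) : z = 0 := by
  have hinv : ∀ t ∈ ({t | t.IsSwap} : Finset (Perm α)), t⁻¹ = t := fun t ht => by
    obtain ⟨x, y, -, rfl⟩ := (mem_filter.1 ht).2
    exact Equiv.swap_inv x y
  have hle : (twiceContentSum (shape c₀) : ℝ) * ∑ c, z c ^ 2 ≤ 0 :=
    calc _ = ∑ c, (twiceContentSum (shape c) : ℝ) * z c ^ 2 := by
          rw [mul_sum]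
          refine sum_congr rfl fun c _ => ?_
          by_cases hc : c ∈ orbit (Perm α) c₀
          · rw [mem_orbit_iff_shape_eq.1 hc]
          · simp [hz c hc]
      _ ≤ 2 * ∑ c, ∑ t : Perm α with t.IsSwap, z c * z (t • c) := sum_twiceContentSum_mul_sq_le z
      _ = 0 := by
          refine mul_eq_zero_of_right _ (sum_eq_zero fun c _ => ?_)
          have hc : ∑ t : Perm α with t.IsSwap, z (t • c) = 0 :=
            (sum_congr rfl fun t ht => by rw [hinv t ht]).trans (h c)
          rw [← mul_sum, hc, mul_zero]
  have hsum : ∑ c, z c ^ 2 = 0 :=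
    le_antisymm (nonpos_of_mul_nonpos_right hle (by exact_mod_cast hc₀))
      (sum_nonneg fun c _ => sq_nonneg (z c))
  funext c
  simpa using (sum_eq_zero_iff_of_nonneg fun c _ => sq_nonneg (z c)).1 hsum c (mem_univ c)

variable {n l : ℕ} {Y : Set (Perm (Fin n))}

theorem ncard_orbit_mul_ncard_eq_of_isTiling (hT : IsTiling (transpositions n) Y)
    {c d : Fin n → Fin l} (hc : 0 < twiceContentSum (shape c)) (hd : shape d = shape c) :
    (orbit (Perm (Fin n)) c).ncard * {y ∈ Y | y • c = d}.ncard = Y.ncard := by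
  classical
  have hX : IsTiling (({t | t.IsSwap} : Finset (Perm (Fin n))) : Set (Perm (Fin n)))
      (Y.toFinset : Set (Perm (Fin n))) := by
    convert hT
    · ext
      simp [transpositions]
    · simp
  have key := hX.ncard_orbit_mul_card_eq (eq_zero_of_sum_isSwap_inv_smul_eq_zero hc)
    (mem_orbit_iff_shape_eq.2 hd)
  rw [← Set.ncard_coe_finset, ← Set.ncard_coe_finset] at key
  simpa using key

theorem exists_pos_mul_ncard_eq_of_isTiling (hT : IsTiling (transpositions n) Y)
    {lam : Fin l → ℕ} (hcontent : 0 < twiceContentSum lam) {P₀ : Fin l → Finset (Fin n)}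
    (hP₀ : IsOrderedPartition lam P₀) :
    ∃ k > 0, ∀ P Q, IsOrderedPartition lam P → IsOrderedPartition lam Q →
      k * {y ∈ Y | ∀ i, (P i).image y = Q i}.ncard = Y.ncard := by
  obtain ⟨c₀, hc₀, -⟩ := hP₀.exists_coloring
  refine ⟨(orbit (Perm (Fin n)) c₀).ncard,
    (Set.ncard_pos (Set.toFinite _)).2 ⟨c₀, mem_orbit_self c₀⟩, fun P Q hP hQ => ?_⟩
  obtain ⟨cP, hcP, hfP⟩ := hP.exists_coloring
  obtain ⟨cQ, hcQ, hfQ⟩ := hQ.exists_coloring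
  simp_rw [image_eq_iff_perm_smul_eq hfP hfQ]
  rw [← orbit_eq_iff.2 (mem_orbit_iff_shape_eq.2 (hcP.trans hc₀.symm))]
  exact ncard_orbit_mul_ncard_eq_of_isTiling hT (hcP ▸ hcontent) (hcQ.trans hcP.symm)

end Coloring

theorem lambda_transitive_of_transposition_tiling_general (n : ℕ)
    (Y : Set (Equiv.Perm (Fin n))) (hT : IsTiling (transpositions n) Y)
    (l : ℕ) (lam : Fin l → ℕ)
    (hcontent : 0 < ∑ i : Fin l,
      (lam i : ℤ) * ((lam i : ℤ) - 2 * (((i : ℕ) : ℤ) + 1) + 1)) :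
    ∃ r : ℕ, 0 < r ∧
      ∀ P Q : Fin l → Finset (Fin n),
        (∀ i, (P i).card = lam i) → (∀ i, (Q i).card = lam i) →
        (∀ i j, i ≠ j → Disjoint (P i) (P j)) →
        (∀ i j, i ≠ j → Disjoint (Q i) (Q j)) →
        Finset.univ.biUnion P = Finset.univ →
        Finset.univ.biUnion Q = Finset.univ →
        {y ∈ Y | ∀ i, (P i).image (⇑y) = Q i}.ncard = r := by
  obtain ⟨P₀, hP₀⟩ | hnone := em (∃ P₀ : Fin l → Finset (Fin n), IsOrderedPartition lam P₀)
  · obtain ⟨k, hk, hN⟩ := exists_pos_mul_ncard_eq_of_isTiling hT hcontent hP₀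
    have hY : 0 < Y.ncard := by
      obtain ⟨⟨_, y⟩, ⟨-, hy, -⟩, -⟩ := hT 1
      exact (Set.ncard_pos (Set.toFinite Y)).2 ⟨y, hy⟩
    refine ⟨_, Nat.pos_of_mul_pos_left ((hN P₀ P₀ hP₀ hP₀).symm ▸ hY), ?_⟩
    intro P Q hP hQ hPd hQd hPc hQc
    exact Nat.eq_of_mul_eq_mul_left hk
      ((hN P Q ⟨hP, hPd, hPc⟩ ⟨hQ, hQd, hQc⟩).trans (hN P₀ P₀ hP₀ hP₀).symm)
  · exact ⟨1, one_pos, fun P _ hP _ hPd _ hPc _ => (hnone ⟨P, hP, hPd, hPc⟩).elim⟩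

theorem lambda_transitive_of_transposition_tiling (n : ℕ) (hn : 2 ≤ n)
    (Y : Set (Equiv.Perm (Fin n))) (hT : IsTiling (transpositions n) Y)
    (l : ℕ) (lam : Fin l → ℕ)
    (hmono : ∀ i j : Fin l, i ≤ j → lam j ≤ lam i)
    (hpos : ∀ i, 0 < lam i)
    (hsum : ∑ i, lam i = n)
    (hcontent : 0 < ∑ i : Fin l,
      (lam i : ℤ) * ((lam i : ℤ) - 2 * (((i : ℕ) : ℤ) + 1) + 1)) :
    ∃ r : ℕ, 0 < r ∧
      ∀ P Q : Fin l → Finset (Fin n),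
        (∀ i, (P i).card = lam i) → (∀ i, (Q i).card = lam i) →
        (∀ i j, i ≠ j → Disjoint (P i) (P j)) →
        (∀ i j, i ≠ j → Disjoint (Q i) (Q j)) →
        Finset.univ.biUnion P = Finset.univ →
        Finset.univ.biUnion Q = Finset.univ →
        {y ∈ Y | ∀ i, (P i).image (⇑y) = Q i}.ncard = r :=
  lambda_transitive_of_transposition_tiling_general n Y hT l lam hcontent
end

section
/- Let n ≥ 2 and suppose (T_n*, Y) is a tiling of the symmetric group S_n, where T_n* is the set of all transpositions in S_n. Then Y is k-transitive for every positive integer k with 2k ≤ n − 2. -/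
open Finset Equiv

theorem Finset.eq_of_forall_mul_add_sum_eq {β ι R : Type*} [CommRing R] [LinearOrder R]
    [IsStrictOrderedRing R] {S : Finset β} {J : Finset ι} {g : ι → β → β}
    (hg : ∀ x ∈ S, ∀ j ∈ J, g j x ∈ S) {f : β → R} {l c : R} (hl : (#J : R) < l)
    (h : ∀ x ∈ S, l * f x + ∑ j ∈ J, f (g j x) = c) {x y : β} (hx : x ∈ S)
    (hy : y ∈ S) :
    f x = f y := by
  suffices hle : ∀ x ∈ S, ∀ y ∈ S, f x ≤ f y from (hle x hx y hy).antisymm (hle y hy x hx)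
  intro x hx y hy
  obtain ⟨xM, hxM, hM⟩ := S.exists_max_image f ⟨x, hx⟩
  obtain ⟨xm, hxm, hm⟩ := S.exists_min_image f ⟨x, hx⟩
  have hupper : c ≤ l * f xm + #J * f xM := by
    grw [← h xm hxm, sum_le_card_nsmul J _ _ fun j hj => hM _ (hg xm hxm j hj), nsmul_eq_mul]
  have hlower : l * f xM + #J * f xm ≤ c := by
    grw [← h xM hxM, ← card_nsmul_le_sum J _ _ fun j hj => hm _ (hg xM hxM j hj), nsmul_eq_mul]
  have : f xM ≤ f xm := by nlinarith
  linarith [hM x hx, hm y hy]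

theorem Equiv.swap_eq_swap_iff_s7 {α : Type*} [DecidableEq α] {x y u v : α} (hxy : x ≠ y) :
    swap u v = swap x y ↔ u = x ∧ v = y ∨ u = y ∧ v = x := by
  constructor
  · intro h
    have hu := congrArg (· u) h
    have hv := congrArg (· v) h
    have hx := congrArg (· x) h
    simp only [swap_apply_left, swap_apply_right, swap_apply_def] at hu hv hx
    grind
  · rintro (⟨rfl, rfl⟩ | ⟨rfl, rfl⟩)
    · rfl
    · exact swap_comm _ _

theorem Function.Injective.swap_comp_eq_update {ι α : Type*} [DecidableEq ι] [DecidableEq α]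
    {f : ι → α} (hf : Function.Injective f) {c : α} (hc : ∀ j, f j ≠ c) (i : ι) :
    Equiv.swap (f i) c ∘ f = Function.update f i c := by
  funext j
  rcases eq_or_ne j i with rfl | hji
  · simp
  · rw [Function.comp_apply, Function.update_of_ne hji,
      swap_apply_of_ne_of_ne (hf.ne hji) (hc j)]

variable {α : Type*} [Fintype α] [DecidableEq α]

-- `T_n^*` as a finset: membership in `{σ | σ.IsSwap}` is not decidable by instance.
def transpositionFinset (α : Type*) [Fintype α] [DecidableEq α] : Finset (Perm α) :=
  univ.offDiag.image fun p : α × α => swap p.1 p.2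

theorem sum_offDiag_swap_eq_two_nsmul {M : Type*} [AddCommMonoid M] (f : Perm α → M) :
    ∑ p ∈ (univ : Finset α).offDiag, f (swap p.1 p.2) =
      2 • ∑ σ ∈ transpositionFinset α, f σ := by
  rw [Finset.sum_comp, smul_sum, transpositionFinset]
  refine sum_congr rfl fun σ hσ => ?_
  obtain ⟨⟨x, y⟩, hxy, rfl⟩ := mem_image.1 hσ
  have hxy : x ≠ y := (mem_offDiag.1 hxy).2.2
  have hfiber :
      {p ∈ (univ : Finset α).offDiag | Equiv.swap p.1 p.2 = swap x y} = {(x, y), (y, x)} := by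
    ext ⟨u, v⟩
    simp only [mem_filter, mem_offDiag, mem_univ, true_and, swap_eq_swap_iff_s7 hxy, mem_insert,
      mem_singleton, Prod.mk.injEq]
    grind
  rw [hfiber, card_pair (by simp [hxy])]

theorem Finset.sum_offDiag_univ_eq {M : Type*} [AddCommMonoid M] (s : Finset α)
    (f : α × α → M) :
    ∑ p ∈ (univ : Finset α).offDiag, f p = ∑ p ∈ s.offDiag, f p
      + ∑ p ∈ s ×ˢ sᶜ, (f p + f p.swap) + ∑ p ∈ sᶜ.offDiag, f p := by
  rw [← union_compl s, offDiag_union disjoint_compl_right, sum_union, sum_union, sum_union]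
  · rw [sum_add_distrib, sum_product_right sᶜ s, sum_product s sᶜ fun p => f p.swap]
    abel
  all_goals simp only [disjoint_left, mem_union, mem_offDiag, mem_product, mem_compl]; tauto

theorem IsTiling.card_filter {G : Type*} [Group G] [Fintype G] [DecidableEq G] {X Y : Finset G}
    (h : IsTiling (X : Set G) Y) (p : G → Prop) [DecidablePred p] :
    #{g | p g} = ∑ x ∈ X, #{y ∈ Y | p (x * y)} := by
  have : ∑ x ∈ X, #{y ∈ Y | p (x * y)} = #{q ∈ X ×ˢ Y | p (q.1 * q.2)} := by
    rw [Finset.card_filter, sum_product]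
    simp only [Finset.card_filter]
  rw [this]
  symm
  refine card_bij (fun q _ => q.1 * q.2) (fun q hq => by simpa using (mem_filter.1 hq).2) ?_ ?_
  · intro q hq q' hq' he
    simp only [mem_filter, mem_product] at hq hq'
    obtain ⟨_, _, huniq⟩ := h (q.1 * q.2)
    exact (huniq q ⟨hq.1.1, hq.1.2, rfl⟩).trans (huniq q' ⟨hq'.1.1, hq'.1.2, he.symm⟩).symm
  · intro g hg
    obtain ⟨q, ⟨hq1, hq2, rfl⟩, _⟩ := h g
    exact ⟨q, mem_filter.2 ⟨mem_product.2 ⟨hq1, hq2⟩, by simpa using hg⟩, rfl⟩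

variable {ι : Type*} [Fintype ι]

def numSending (Y : Finset (Perm α)) (a b : ι → α) : ℕ :=
  #{y ∈ Y | ∀ i, y (a i) = b i}

theorem numSending_univ_eq {a b a' b' : ι → α} (ha : Function.Injective a)
    (hb : Function.Injective b) (ha' : Function.Injective a') (hb' : Function.Injective b') :
    numSending univ a b = numSending univ a' b' := by
  obtain ⟨u, hu⟩ := Perm.exists_extending_pair a a' ha ha'
  obtain ⟨v, hv⟩ := Perm.exists_extending_pair b b' hb hb'
  refine card_equiv ((Equiv.mulLeft v).trans (Equiv.mulRight u⁻¹)) fun g => ?_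
  simp [← hu, ← hv]

theorem IsTiling.two_mul_numSending_univ {Y : Finset (Perm α)}
    (hT : IsTiling (transpositionFinset α : Set (Perm α)) Y) (a b : ι → α) :
    2 * numSending univ a b = ∑ p ∈ univ.offDiag, numSending Y a (swap p.1 p.2 ∘ b) := by
  rw [sum_offDiag_swap_eq_two_nsmul fun σ => numSending Y a (σ ∘ b), smul_eq_mul, numSending,
    hT.card_filter]
  congr 1
  refine sum_congr rfl fun σ hσ => ?_
  obtain ⟨⟨x, y⟩, -, rfl⟩ := mem_image.1 (by rwa [transpositionFinset] at hσ)
  simp only [numSending, Perm.mul_apply, Function.comp_apply, swap_apply_eq_iff]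

theorem sum_offDiag_numSending_swap_comp [DecidableEq ι] (Y : Finset (Perm α)) (a : ι → α)
    {b : ι → α} (hb : Function.Injective b) :
    ∑ p ∈ univ.offDiag, numSending Y a (swap p.1 p.2 ∘ b) =
      ∑ q ∈ univ.offDiag, numSending Y a (b ∘ swap q.1 q.2)
      + 2 * ∑ i, ∑ c ∈ (univ.image b)ᶜ, numSending Y a (Function.update b i c)
      + ((Fintype.card α - Fintype.card ι) * (Fintype.card α - Fintype.card ι)
          - (Fintype.card α - Fintype.card ι)) * numSending Y a b := by
  rw [sum_offDiag_univ_eq (univ.image b)]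
  congr 1
  congr 1
  · have : (univ.image b).offDiag = univ.offDiag.image (Prod.map b b) := by
      ext ⟨x, y⟩
      simp only [mem_offDiag, mem_image, mem_univ, true_and, Prod.exists, Prod.map, Prod.mk.injEq]
      constructor
      · rintro ⟨⟨i, rfl⟩, ⟨j, rfl⟩, hne⟩
        exact ⟨i, j, fun h => hne (h ▸ rfl), rfl, rfl⟩
      · rintro ⟨i, j, hij, rfl, rfl⟩
        exact ⟨⟨i, rfl⟩, ⟨j, rfl⟩, hb.ne hij⟩
    rw [this, sum_image (hb.prodMap hb).injOn]
    refine sum_congr rfl fun q _ => ?_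
    rw [Prod.map_fst, Prod.map_snd, hb.swap_comp]
  · rw [sum_product, sum_image hb.injOn, mul_sum]
    refine sum_congr rfl fun i _ => ?_
    rw [mul_sum]
    refine sum_congr rfl fun c hc => ?_
    have hc' : ∀ j, b j ≠ c := by simpa using hc
    rw [Prod.swap_prod_mk, swap_comm c, hb.swap_comp_eq_update hc', two_mul]
  · rw [sum_congr rfl fun p hp => ?_, sum_const, offDiag_card, card_compl,
      card_image_of_injective _ hb, card_univ, smul_eq_mul]
    simp only [mem_offDiag, mem_compl, mem_image, mem_univ, true_and, not_exists] at hp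
    congr 1
    funext j
    exact swap_apply_of_ne_of_ne (hp.1 j) (hp.2.1 j)

theorem numSending_add_sum_update {k : ℕ} (Y : Finset (Perm α)) {a b : Fin (k + 1) → α}
    (ha : Function.Injective a) (i : Fin (k + 1)) :
    numSending Y a b + ∑ c ∈ (univ.image b)ᶜ, numSending Y a (Function.update b i c) =
      numSending Y (a ∘ i.succAbove) (b ∘ i.succAbove) := by
  have hmaps : Set.MapsTo (fun y : Perm α => y (a i))
      ↑({y ∈ Y | ∀ j, y (a (i.succAbove j)) = b (i.succAbove j)})
      ↑(insert (b i) (univ.image b)ᶜ) := by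
    intro y hy
    simp only [coe_filter, Set.mem_ofPred_eq] at hy
    simp only [coe_insert, coe_compl, coe_image, coe_univ, Set.image_univ, Set.mem_insert_iff,
      Set.mem_compl_iff, Set.mem_range, not_exists]
    refine or_iff_not_imp_left.2 fun hne j hj => ?_
    rcases eq_or_ne j i with rfl | hji
    · exact hne hj.symm
    obtain ⟨j', rfl⟩ := Fin.exists_succAbove_eq hji
    rw [← hy.2 j'] at hj
    exact Fin.succAbove_ne i j' (ha (y.injective hj))
  calc numSending Y a b + ∑ c ∈ (univ.image b)ᶜ, numSending Y a (Function.update b i c)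
      = ∑ c ∈ insert (b i) (univ.image b)ᶜ, numSending Y a (Function.update b i c) := by
        rw [sum_insert (by simp), Function.update_eq_self]
    _ = _ := by
      simp only [numSending, Function.comp_apply]
      rw [card_eq_sum_card_fiberwise hmaps]
      refine sum_congr rfl fun c _ => ?_
      rw [filter_filter]
      congr 1
      ext y
      simp only [mem_filter]
      rw [Fin.forall_iff_succAbove i, Function.update_self]
      simp only [Function.update_of_ne (Fin.succAbove_ne i _)]
      tauto

theorem IsTiling.two_mul_numSending_univ_add {Y : Finset (Perm α)}
    (hT : IsTiling (transpositionFinset α : Set (Perm α)) Y)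
    {k r : ℕ} (hr : ∀ a b : Fin k → α, Function.Injective a → Function.Injective b →
      numSending Y a b = r)
    {a b : Fin (k + 1) → α} (ha : Function.Injective a) (hb : Function.Injective b) :
    2 * numSending univ a b + 2 * (k + 1) * numSending Y a b =
      ((Fintype.card α - (k + 1)) * (Fintype.card α - (k + 1)) - (Fintype.card α - (k + 1)))
        * numSending Y a b + 2 * (k + 1) * r
      + ∑ q ∈ univ.offDiag, numSending Y a (b ∘ swap q.1 q.2) := by
  have hupdate : ∑ i, ∑ c ∈ (univ.image b)ᶜ, numSending Y a (Function.update b i c)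
      + (k + 1) * numSending Y a b = (k + 1) * r := by
    calc _ = ∑ i : Fin (k + 1), (numSending Y a b
            + ∑ c ∈ (univ.image b)ᶜ, numSending Y a (Function.update b i c)) := by
          rw [sum_add_distrib, sum_const, card_univ, Fintype.card_fin, smul_eq_mul, add_comm]
      _ = ∑ _ : Fin (k + 1), r := sum_congr rfl fun i _ => by
          rw [numSending_add_sum_update Y ha i, hr _ _ (ha.comp (Fin.succAbove_right_injective))
            (hb.comp (Fin.succAbove_right_injective))]
      _ = (k + 1) * r := by simp
  rw [hT.two_mul_numSending_univ, sum_offDiag_numSending_swap_comp Y a hb, Fintype.card_fin]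
  linarith

theorem IsTiling.exists_numSending_eq_succ {Y : Finset (Perm α)}
    (hT : IsTiling (transpositionFinset α : Set (Perm α)) Y)
    {k r : ℕ} (hk : 2 * (k + 1) + 2 ≤ Fintype.card α)
    (hr : ∀ a b : Fin k → α, Function.Injective a → Function.Injective b →
      numSending Y a b = r) :
    ∃ r', ∀ a b : Fin (k + 1) → α, Function.Injective a → Function.Injective b →
      numSending Y a b = r' := by
  obtain ⟨a₀, ha₀⟩ := Function.Embedding.nonempty_of_card_le (α := Fin (k + 1)) (β := α)
    (by rw [Fintype.card_fin]; omega)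
  set m := Fintype.card α - (k + 1)
  let S : Finset ((Fin (k + 1) → α) × (Fin (k + 1) → α)) :=
    {p | Function.Injective p.1 ∧ Function.Injective p.2}
  have h₀ : (a₀, a₀) ∈ S := mem_filter.2 ⟨mem_univ _, ha₀, ha₀⟩
  refine ⟨numSending Y a₀ a₀, fun a b ha hb => ?_⟩
  have hS : (a, b) ∈ S := mem_filter.2 ⟨mem_univ _, ha, hb⟩
  have hl :
      (#(univ : Finset (Fin (k + 1))).offDiag : ℤ) < ((m * m - m : ℕ) : ℤ) - 2 * (k + 1) := by
    have : k + 3 ≤ m := by omega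
    rw [offDiag_card, card_univ, Fintype.card_fin, Nat.cast_sub (Nat.le_mul_self _),
      Nat.cast_sub (Nat.le_mul_self _)]
    push_cast
    nlinarith
  have hN := Finset.eq_of_forall_mul_add_sum_eq (S := S)
    (g := fun q p => (p.1, p.2 ∘ swap q.1 q.2)) (f := fun p => (numSending Y p.1 p.2 : ℤ))
    (c := 2 * numSending univ a₀ a₀ - 2 * (k + 1) * r)
    (fun p hp q _ => mem_filter.2 ⟨mem_univ _, (mem_filter.1 hp).2.1,
      (mem_filter.1 hp).2.2.comp (swap _ _).injective⟩) hl ?_ hS h₀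
  · exact_mod_cast hN
  intro p hp
  obtain ⟨-, hp1, hp2⟩ := mem_filter.1 hp
  have key := hT.two_mul_numSending_univ_add hr hp1 hp2
  rw [numSending_univ_eq hp1 hp2 ha₀ ha₀] at key
  have key' := congrArg (Nat.cast : ℕ → ℤ) key
  push_cast at key' ⊢
  linear_combination -key'

theorem IsTiling.exists_numSending_eq {Y : Finset (Perm α)}
    (hT : IsTiling (transpositionFinset α : Set (Perm α)) Y)
    {k : ℕ} (hk : 2 * k ≤ Fintype.card α - 2) :
    ∃ r, ∀ a b : Fin k → α, Function.Injective a → Function.Injective b →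
      numSending Y a b = r := by
  induction k with
  | zero => exact ⟨#Y, fun a b _ _ => by simp [numSending]⟩
  | succ k ih => exact hT.exists_numSending_eq_succ (by omega) (ih (by omega)).choose_spec

theorem k_transitive_of_transposition_tiling_general (n : ℕ)
    (Y : Set (Equiv.Perm (Fin n))) (hT : IsTiling (transpositions n) Y)
    (k : ℕ) (hkn : 2 * k ≤ n - 2) :
    ∃ r : ℕ, 0 < r ∧
      ∀ a b : Fin k → Fin n, Function.Injective a → Function.Injective b →
        {y ∈ Y | ∀ i, y (a i) = b i}.ncard = r := by
  classical
  have hswaps : (transpositionFinset (Fin n) : Set (Perm (Fin n))) = transpositions n := by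
    ext σ
    simp [transpositionFinset, transpositions, Perm.IsSwap, eq_comm]
  rw [← hswaps, ← Set.coe_toFinset Y] at hT
  obtain ⟨r, hr⟩ := hT.exists_numSending_eq (by simpa using hkn)
  obtain ⟨⟨_, y⟩, ⟨_, hy, _⟩, _⟩ := hT 1
  have hkn' : k ≤ n := by omega
  refine ⟨r, ?_, fun a b ha hb => ?_⟩
  · rw [← hr _ _ (Fin.castLE_injective hkn') (y.injective.comp (Fin.castLE_injective hkn'))]
    exact card_pos.2 ⟨y, by simpa using hy⟩
  · rw [← hr a b ha hb, numSending, ← Set.ncard_coe_finset, coe_filter]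
    simp only [Set.mem_toFinset]

theorem k_transitive_of_transposition_tiling (n : ℕ) (hn : 2 ≤ n)
    (Y : Set (Equiv.Perm (Fin n))) (hT : IsTiling (transpositions n) Y)
    (k : ℕ) (hk : 0 < k) (hkn : 2 * k ≤ n - 2) :
    ∃ r : ℕ, 0 < r ∧
      ∀ a b : Fin k → Fin n, Function.Injective a → Function.Injective b →
        {y ∈ Y | ∀ i, y (a i) = b i}.ncard = r :=
  k_transitive_of_transposition_tiling_general n Y hT k hkn
end

section
/- Let G be a group and let (X, Y) be a tiling of G such that X is closed under conjugation in G (i.e., g·x·g⁻¹ ∈ X for all x ∈ X and g ∈ G). Then for all g, h ∈ G, the pair (X, gYh) is also a tiling of G, where gYh = {g·y·h : y ∈ Y}. -/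
theorem tiling_translate {G : Type*} [Group G] (X Y : Set G)
    (h : IsTiling X Y)
    (hX : ∀ x ∈ X, ∀ g : G, g * x * g⁻¹ ∈ X)
    (g h' : G) :
    IsTiling X ((fun y => g * y * h') '' Y) := by
  intro t
  obtain ⟨⟨x0, y0⟩, ⟨hx0, hy0, heq⟩, huniq⟩ := h (g⁻¹ * t * h'⁻¹)
  refine ⟨(g * x0 * g⁻¹, g * y0 * h'), ⟨hX x0 hx0 g, ⟨y0, hy0, rfl⟩, ?_⟩, ?_⟩
  · have : g * (x0 * y0) * h' = t := by
      rw [heq]; group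
    simpa [mul_assoc] using this
  · rintro ⟨x, z⟩ ⟨hx, ⟨y, hy, rfl⟩, hxz⟩
    have hx' : g⁻¹ * x * g ∈ X := by
      simpa using hX x hx g⁻¹
    have hprod : (g⁻¹ * x * g) * y = g⁻¹ * t * h'⁻¹ := by
      rw [← hxz]; group
    have := huniq (g⁻¹ * x * g, y) ⟨hx', hy, hprod⟩
    have hx0' : g⁻¹ * x * g = x0 := congrArg Prod.fst this
    have hy0' : y = y0 := congrArg Prod.snd this
    have : x = g * x0 * g⁻¹ := by rw [← hx0']; group
    simp [this, hy0']
end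

section
/- Let G be a group and let (X, Y) be a tiling of G such that X is closed under inversion (x⁻¹ ∈ X for all x ∈ X) and closed under conjugation in G (g·x·g⁻¹ ∈ X for all x ∈ X and g ∈ G). Then (X, Y⁻¹) is also a tiling of G, where Y⁻¹ = {y⁻¹ : y ∈ Y}. -/
theorem tiling_inverse {G : Type*} [Group G] (X Y : Set G)
    (h : IsTiling X Y)
    (hXinv : ∀ x ∈ X, x⁻¹ ∈ X)
    (hXconj : ∀ x ∈ X, ∀ g : G, g * x * g⁻¹ ∈ X) :
    IsTiling X ((fun y => y⁻¹) '' Y) := by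
  intro g
  obtain ⟨⟨x₀, y₀⟩, ⟨hx₀, hy₀, hxy₀⟩, huniq⟩ := h g⁻¹
  refine ⟨(y₀⁻¹ * x₀⁻¹ * y₀, y₀⁻¹), ⟨?_, ⟨y₀, hy₀, rfl⟩, ?_⟩, ?_⟩
  · have := hXconj x₀⁻¹ (hXinv x₀ hx₀) y₀⁻¹
    simpa using this
  · simp only []
    have : x₀ * y₀ = g⁻¹ := hxy₀
    have hg : g = (x₀ * y₀)⁻¹ := by rw [this]; group
    rw [hg]; group
  · rintro ⟨x, z⟩ ⟨hx, ⟨y, hy, rfl⟩, hprod⟩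
    simp only [] at hprod
    have hginv : (y * x⁻¹ * y⁻¹) * y = g⁻¹ := by
      rw [← hprod]; group
    have hmem : y * x⁻¹ * y⁻¹ ∈ X := hXconj x⁻¹ (hXinv x hx) y
    have heq := huniq (y * x⁻¹ * y⁻¹, y) ⟨hmem, hy, hginv⟩
    have h1 : y * x⁻¹ * y⁻¹ = x₀ := congrArg Prod.fst heq
    have h2 : y = y₀ := congrArg Prod.snd heq
    subst h2
    have hx' : x = y⁻¹ * x₀⁻¹ * y := by
      have : x⁻¹ = y⁻¹ * x₀ * y := by rw [← h1]; group
      calc x = (x⁻¹)⁻¹ := by group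
        _ = (y⁻¹ * x₀ * y)⁻¹ := by rw [this]
        _ = y⁻¹ * x₀⁻¹ * y := by group
    ext
    · simp [hx']
    · simp
end

section
/- Let G be a finite group and let (X, Y) be a tiling of G such that X is closed under conjugation in G. Let V be a nonzero finite-dimensional complex vector space and ρ : G → GL(V) an irreducible representation of G that is not the trivial representation, with character χ(g) = tr ρ(g). If ∑_{x∈X} χ(x) ≠ 0, then ∑_{y∈Y} ρ(y) = 0 as a linear endomorphism of V. -/
theorem rep_sum_vanishes {G : Type*} [Group G] [Fintype G]
    (X Y : Finset G)
    (h : IsTiling (X : Set G) (Y : Set G))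
    (hConj : ∀ x ∈ X, ∀ g : G, g * x * g⁻¹ ∈ X)
    (V : Type*) [AddCommGroup V] [Module ℂ V] [FiniteDimensional ℂ V] [Nontrivial V]
    (ρ : Representation ℂ G V)
    (hirr : ∀ W : Submodule ℂ V, (∀ g : G, ∀ v ∈ W, ρ g v ∈ W) → W = ⊥ ∨ W = ⊤)
    (hnontriv : ¬ ∀ g : G, ρ g = 1)
    (hchi : ∑ x ∈ X, LinearMap.trace ℂ V (ρ x) ≠ 0) :
    ∑ y ∈ Y, ρ y = 0 := by
  classical
  set A : V →ₗ[ℂ] V := ∑ x ∈ X, ρ x with hA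
  set B : V →ₗ[ℂ] V := ∑ y ∈ Y, ρ y with hB
  set S : V →ₗ[ℂ] V := ∑ g : G, ρ g with hS
  -- Step 1 : A * B = S
  have hAB : A * B = S := by
    rw [hA, hB, hS, Finset.sum_mul_sum, ← Finset.sum_product']
    refine Finset.sum_bij (fun p _ => p.1 * p.2) ?_ ?_ ?_ ?_
    · intro p _; exact Finset.mem_univ _
    · intro p hp q hq hpq
      simp only [Finset.mem_product] at hp hq
      exact ((h (p.1 * p.2)).unique ⟨hp.1, hp.2, rfl⟩ ⟨hq.1, hq.2, hpq.symm⟩)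
    · intro g _
      obtain ⟨p, ⟨hp1, hp2, hp3⟩, _⟩ := h g
      exact ⟨p, Finset.mem_product.mpr ⟨hp1, hp2⟩, hp3⟩
    · intro p _
      exact (map_mul ρ p.1 p.2).symm
  -- Step 2 : S = 0
  have hgS : ∀ g : G, ρ g * S = S := by
    intro g
    rw [hS, Finset.mul_sum]
    exact Fintype.sum_bijective (g * ·) (Group.mulLeft_bijective g) _ _
      (fun h => (map_mul ρ g h).symm)
  have hS0 : S = 0 := by
    let W : Submodule ℂ V :=
      { carrier := {v | ∀ g : G, ρ g v = v}
        add_mem' := fun {a b} ha hb g => by rw [map_add, ha g, hb g]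
        zero_mem' := fun g => map_zero _
        smul_mem' := fun c a ha g => by rw [map_smul, ha g] }
    have hWinv : ∀ g : G, ∀ v ∈ W, ρ g v ∈ W := by
      intro g v hv g'
      rw [hv g, hv g']
    rcases hirr W hWinv with hbot | htop
    · ext v
      have : S v ∈ W := by
        intro g
        have := congrArg (fun f : V →ₗ[ℂ] V => f v) (hgS g)
        simpa using this
      rw [hbot] at this
      simpa using this
    · exfalso
      apply hnontriv
      intro g
      ext v
      have hv : v ∈ W := htop ▸ Submodule.mem_top
      simpa using hv g
  -- Step 3 : A commutes with every ρ g
  have hcomm : ∀ g : G, ρ g * A = A * ρ g := by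
    intro g
    rw [hA, Finset.mul_sum, Finset.sum_mul]
    refine Finset.sum_bij' (fun x _ => g * x * g⁻¹) (fun x _ => g⁻¹ * x * g)
      ?_ ?_ ?_ ?_ ?_
    · intro x hx; exact hConj x hx g
    · intro x hx
      have := hConj x hx g⁻¹
      simpa using this
    · intro x _; group
    · intro x _; group
    · intro x _
      rw [← map_mul, ← map_mul]
      congr 1
      group
  -- Step 4 : Schur — A is scalar
  obtain ⟨μ, hμ⟩ := Module.End.exists_eigenvalue (A : Module.End ℂ V)
  have hAsc : A = μ • (1 : V →ₗ[ℂ] V) := by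
    have hinv : ∀ g : G, ∀ v ∈ Module.End.eigenspace A μ,
        ρ g v ∈ Module.End.eigenspace A μ := by
      intro g v hv
      rw [Module.End.mem_eigenspace_iff] at hv ⊢
      have : A (ρ g v) = ρ g (A v) := by
        have := congrArg (fun f : V →ₗ[ℂ] V => f v) (hcomm g)
        simpa using this.symm
      rw [this, hv, map_smul]
    rcases hirr _ hinv with hbot | htop
    · exact absurd hbot hμ
    · ext v
      have hv : v ∈ Module.End.eigenspace A μ := htop ▸ Submodule.mem_top
      rw [Module.End.mem_eigenspace_iff] at hv
      simpa using hv
  -- Step 5 : μ ≠ 0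
  have hμ0 : μ ≠ 0 := by
    intro hzero
    apply hchi
    have : LinearMap.trace ℂ V A = ∑ x ∈ X, LinearMap.trace ℂ V (ρ x) := by
      rw [hA, map_sum]
    rw [← this, hAsc, hzero, zero_smul, map_zero]
  -- Step 6 : conclude
  have : μ • B = 0 := by
    rw [← hS0, ← hAB, hAsc]
    ext v
    simp
  rcases smul_eq_zero.mp this with h' | h'
  · exact absurd h' hμ0
  · exact h'
end

section
/- Let n ≥ 2 and let Y be a nonempty subset of the symmetric group S_n. Then (T_n, Y) is a tiling of S_n if and only if Y is an independent set of the graph Σ_n and |Y| · (1 + n(n−1)/2) = n!. -/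
/-- `T_n² = {t₁ * t₂ : t₁, t₂ ∈ T_n}`. -/
def Tsq (n : ℕ) : Set (Equiv.Perm (Fin n)) :=
  {g | ∃ t₁ ∈ transpositionsWithId n, ∃ t₂ ∈ transpositionsWithId n, g = t₁ * t₂}

/-- The graph `Σ_n` on `S_n`, where distinct `g, h` are adjacent iff `g * h⁻¹ ∈ T_n²`. -/
def SigmaGraph (n : ℕ) : SimpleGraph (Equiv.Perm (Fin n)) :=
  SimpleGraph.fromRel (fun g h => g * h⁻¹ ∈ Tsq n)

lemma T_inv_eq {n : ℕ} {t : Equiv.Perm (Fin n)} (ht : t ∈ transpositionsWithId n) :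
    t⁻¹ = t := by
  rcases ht with h | h
  · simp only [Set.mem_singleton_iff] at h
    simp [h]
  · obtain ⟨a, b, hab, rfl⟩ := h
    exact Equiv.swap_inv a b

lemma one_not_isSwap {n : ℕ} : ¬ (1 : Equiv.Perm (Fin n)).IsSwap := by
  rintro ⟨a, b, hab, h⟩
  have : (1 : Equiv.Perm (Fin n)) a = Equiv.swap a b a := by rw [← h]
  simp [Equiv.swap_apply_left] at this
  exact hab this

lemma card_swaps (n : ℕ) :
    Nat.card {σ : Equiv.Perm (Fin n) // σ.IsSwap} = n.choose 2 := by
  let f : {σ : Equiv.Perm (Fin n) // σ.IsSwap} → {s : Finset (Fin n) // s.card = 2} :=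
    fun σ => ⟨σ.1.support, Equiv.Perm.card_support_eq_two.mpr σ.2⟩
  have hbij : Function.Bijective f := by
    constructor
    · rintro ⟨σ, a, b, hab, rfl⟩ ⟨τ, c, d, hcd, rfl⟩ h
      simp only [f, Subtype.mk.injEq, Equiv.Perm.support_swap hab,
        Equiv.Perm.support_swap hcd] at h
      have ha : a = c ∨ a = d := by
        have : a ∈ ({c, d} : Finset (Fin n)) := h ▸ Finset.mem_insert_self a {b}
        simpa using this
      have hb : b = c ∨ b = d := by
        have : b ∈ ({c, d} : Finset (Fin n)) := by
          rw [← h]; simp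
        simpa using this
      rcases ha with rfl | rfl <;> rcases hb with rfl | rfl
      · exact absurd rfl hab
      · rfl
      · simp [Subtype.mk.injEq, Equiv.swap_comm]
      · exact absurd rfl hab
    · rintro ⟨s, hs⟩
      obtain ⟨a, b, hab, rfl⟩ := Finset.card_eq_two.mp hs
      exact ⟨⟨Equiv.swap a b, ⟨a, b, hab, rfl⟩⟩,
        Subtype.ext (Equiv.Perm.support_swap hab)⟩
  rw [Nat.card_eq_of_bijective f hbij, Nat.card_eq_fintype_card,
    Fintype.card_finset_len, Fintype.card_fin]

lemma card_T (n : ℕ) : (transpositionsWithId n).ncard = 1 + n * (n - 1) / 2 := by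
  have heq : transpositionsWithId n
      = insert 1 {σ : Equiv.Perm (Fin n) | σ.IsSwap} := by
    rw [transpositionsWithId, Set.insert_eq]
  have hsw : ({σ : Equiv.Perm (Fin n) | σ.IsSwap}).ncard = n * (n - 1) / 2 := by
    rw [← Nat.card_coe_set_eq]
    have : Nat.card ({σ : Equiv.Perm (Fin n) | σ.IsSwap})
        = Nat.card {σ : Equiv.Perm (Fin n) // σ.IsSwap} := rfl
    rw [this, card_swaps, Nat.choose_two_right]
  rw [heq, Set.ncard_insert_of_notMem (a := (1 : Equiv.Perm (Fin n)))
    (s := {σ : Equiv.Perm (Fin n) | σ.IsSwap}) one_not_isSwap (Set.toFinite _), hsw]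
  omega

lemma tiling_iff_bijective {G : Type*} [Group G] (X Y : Set G) :
    IsTiling X Y ↔ Function.Bijective (fun p : X × Y => (p.1 : G) * p.2) := by
  constructor
  · intro h
    constructor
    · rintro ⟨⟨t, ht⟩, ⟨y, hy⟩⟩ ⟨⟨t', ht'⟩, ⟨y', hy'⟩⟩ hp
      simp only at hp
      obtain ⟨p, _, hun⟩ := h (t * y)
      have e1 := hun (t, y) ⟨ht, hy, rfl⟩
      have e2 := hun (t', y') ⟨ht', hy', hp.symm⟩
      rw [← e2] at e1
      obtain ⟨h1, h2⟩ := Prod.mk.injEq .. ▸ e1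
      simp_all
    · intro g
      obtain ⟨p, hp1, _⟩ := h g
      exact ⟨(⟨p.1, hp1.1⟩, ⟨p.2, hp1.2.1⟩), hp1.2.2⟩
  · intro h g
    obtain ⟨p, hp⟩ := h.surjective g
    refine ⟨(p.1, p.2), ⟨p.1.2, p.2.2, hp⟩, ?_⟩
    rintro ⟨a, b⟩ ⟨ha, hb, hab⟩
    have := h.injective (a₁ := (⟨a, ha⟩, ⟨b, hb⟩)) (a₂ := p)
      (by exact hab.trans hp.symm)
    rw [← this]

theorem tiling_iff_indep_set (n : ℕ) (hn : 2 ≤ n)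
    (Y : Set (Equiv.Perm (Fin n))) (hY : Y.Nonempty) :
    IsTiling (transpositionsWithId n) Y ↔
      ((∀ a ∈ Y, ∀ b ∈ Y, ¬ (SigmaGraph n).Adj a b) ∧
        Y.ncard * (1 + n * (n - 1) / 2) = n.factorial) := by
  have hTinv : ∀ t ∈ transpositionsWithId n, t⁻¹ ∈ transpositionsWithId n := by
    intro t ht; rw [T_inv_eq ht]; exact ht
  have hcardG : Nat.card (Equiv.Perm (Fin n)) = n.factorial := by
    rw [Nat.card_eq_fintype_card, Fintype.card_perm, Fintype.card_fin]
  have hcardprod : Nat.card (↥(transpositionsWithId n) × ↥Y)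
      = (1 + n * (n - 1) / 2) * Y.ncard := by
    rw [Nat.card_prod, Nat.card_coe_set_eq, Nat.card_coe_set_eq, card_T]
  rw [tiling_iff_bijective]
  constructor
  · intro h
    have key : ∀ a ∈ Y, ∀ b ∈ Y, a * b⁻¹ ∈ Tsq n → a = b := by
      intro a ha b hb ⟨t₁, ht₁, t₂, ht₂, habt⟩
      have hmul : t₁⁻¹ * a = t₂ * b := by
        have : a = t₁ * t₂ * b := by
          rw [← habt]; group
        rw [this]; group
      have := h.injective (a₁ := (⟨t₁⁻¹, hTinv t₁ ht₁⟩, ⟨a, ha⟩))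
        (a₂ := (⟨t₂, ht₂⟩, ⟨b, hb⟩)) (by simpa using hmul)
      simpa using congrArg (fun p => (p.2 : Equiv.Perm (Fin n))) this
    constructor
    · intro a ha b hb hadj
      rw [SigmaGraph, SimpleGraph.fromRel_adj] at hadj
      obtain ⟨hne, hr | hr⟩ := hadj
      · exact hne (key a ha b hb hr)
      · exact hne ((key b hb a ha hr).symm)
    · have := Nat.card_eq_of_bijective _ h
      rw [hcardprod, hcardG] at this
      rw [mul_comm] at this
      exact this
  · rintro ⟨hind, hcard⟩
    rw [Nat.bijective_iff_injective_and_card]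
    constructor
    · rintro ⟨⟨t, ht⟩, ⟨y, hy⟩⟩ ⟨⟨t', ht'⟩, ⟨y', hy'⟩⟩ hp
      simp only at hp
      by_cases hyy : y = y'
      · subst hyy
        have : t = t' := mul_right_cancel hp
        simp [this]
      · exfalso
        apply hind y hy y' hy'
        rw [SigmaGraph, SimpleGraph.fromRel_adj]
        refine ⟨hyy, Or.inl ⟨t⁻¹, hTinv t ht, t', ht', ?_⟩⟩
        have : y = t⁻¹ * (t' * y') := by rw [← hp]; group
        rw [this]; group
    · rw [hcardprod, hcardG, mul_comm]; exact hcard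
end

section
/- Let n ≥ 2 and let Y be a nonempty subset of the symmetric group S_n. Then (T_n*, Y) is a tiling of S_n if and only if Y is an independent set of the graph Σ_n* and |Y| = 2·(n−2)!. -/
/-- `(T_n^*)² = {t₁ * t₂ : t₁, t₂ ∈ T_n^*}`. -/
def TstarSq (n : ℕ) : Set (Equiv.Perm (Fin n)) :=
  {g | ∃ t₁ ∈ transpositions n, ∃ t₂ ∈ transpositions n, g = t₁ * t₂}

/-- The graph `Σ_n^*` on `S_n`, where distinct `g, h` are adjacent iff `g * h⁻¹ ∈ (T_n^*)²`. -/
def SigmaStarGraph (n : ℕ) : SimpleGraph (Equiv.Perm (Fin n)) :=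
  SimpleGraph.fromRel (fun g h => g * h⁻¹ ∈ TstarSq n)

open Equiv Equiv.Perm

lemma trans_inv {n : ℕ} {σ : Equiv.Perm (Fin n)} (h : σ ∈ transpositions n) : σ⁻¹ = σ := by
  obtain ⟨a, b, hab, rfl⟩ := h
  exact Equiv.swap_inv a b

lemma swap_eq_of_support_eq {α : Type*} [DecidableEq α] [Fintype α] {σ τ : Equiv.Perm α}
    (hσ : σ.IsSwap) (hτ : τ.IsSwap) (h : σ.support = τ.support) : σ = τ := by
  obtain ⟨a, b, hab, rfl⟩ := hσ
  obtain ⟨c, d, hcd, rfl⟩ := hτ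
  rw [Equiv.Perm.support_swap hab, Equiv.Perm.support_swap hcd] at h
  have ha : a = c ∨ a = d := by
    have : a ∈ ({c, d} : Finset α) := h ▸ Finset.mem_insert_self a {b}
    simpa using this
  have hb : b = c ∨ b = d := by
    have : b ∈ ({c, d} : Finset α) := h ▸ (by simp : b ∈ ({a, b} : Finset α))
    simpa using this
  rcases ha with rfl | rfl <;> rcases hb with rfl | rfl
  · exact absurd rfl hab
  · rfl
  · exact Equiv.swap_comm _ _
  · exact absurd rfl hab

lemma card_transpositions (n : ℕ) :
    Nat.card (transpositions n) = n.choose 2 := by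
  classical
  have h2 : Fintype.card {s : Finset (Fin n) // s.card = 2} = (Fintype.card (Fin n)).choose 2 :=
    Fintype.card_finset_len 2
  rw [Fintype.card_fin] at h2
  rw [← h2, ← Nat.card_eq_fintype_card]
  apply Nat.card_eq_of_bijective (fun σ : transpositions n =>
    (⟨(σ : Equiv.Perm (Fin n)).support, Equiv.Perm.card_support_eq_two.2 σ.2⟩ :
      {s : Finset (Fin n) // s.card = 2}))
  constructor
  · rintro ⟨σ, hσ⟩ ⟨τ, hτ⟩ h
    exact Subtype.ext (swap_eq_of_support_eq hσ hτ (by simpa using congrArg Subtype.val h))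
  · rintro ⟨s, hs⟩
    obtain ⟨a, b, hab, rfl⟩ := Finset.card_eq_two.1 hs
    exact ⟨⟨Equiv.swap a b, ⟨a, b, hab, rfl⟩⟩, Subtype.ext (Equiv.Perm.support_swap hab)⟩

theorem transposition_tiling_iff_indep_set (n : ℕ) (hn : 2 ≤ n)
    (Y : Set (Equiv.Perm (Fin n))) (hY : Y.Nonempty) :
    IsTiling (transpositions n) Y ↔
      ((∀ a ∈ Y, ∀ b ∈ Y, ¬ (SigmaStarGraph n).Adj a b) ∧
        Y.ncard = 2 * (n - 2).factorial) := by
  classical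
  set X := transpositions n with hX
  haveI : Fintype ↥X := Fintype.ofFinite _
  haveI : Fintype ↥Y := Fintype.ofFinite _
  set f : X × Y → Equiv.Perm (Fin n) := fun p => (p.1 : Equiv.Perm (Fin n)) * p.2 with hf
  -- tiling iff f bijective
  have tiling_iff : IsTiling X Y ↔ Function.Bijective f := by
    constructor
    · intro h
      constructor
      · rintro ⟨x₁, y₁⟩ ⟨x₂, y₂⟩ hxy
        obtain ⟨p, _, hp⟩ := h (f (x₁, y₁))
        have h1 := hp (x₁.1, y₁.1) ⟨x₁.2, y₁.2, rfl⟩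
        have h2 := hp (x₂.1, y₂.1) ⟨x₂.2, y₂.2, hxy.symm⟩
        have := h1.trans h2.symm
        exact Prod.ext (Subtype.ext (congrArg Prod.fst this)) (Subtype.ext (congrArg Prod.snd this))
      · intro g
        obtain ⟨p, ⟨hp1, hp2, hp3⟩, _⟩ := h g
        exact ⟨(⟨p.1, hp1⟩, ⟨p.2, hp2⟩), hp3⟩
    · intro h g
      obtain ⟨⟨x, y⟩, hxy⟩ := h.2 g
      refine ⟨(x.1, y.1), ⟨x.2, y.2, hxy⟩, ?_⟩
      rintro ⟨a, b⟩ ⟨ha, hb, hab⟩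
      have := h.1 (a₁ := (⟨a, ha⟩, ⟨b, hb⟩)) (a₂ := (x, y)) (by simpa [hf] using hab.trans hxy.symm)
      simpa [Prod.ext_iff, Subtype.ext_iff] using this
  -- independence iff f injective
  have indep_iff : (∀ a ∈ Y, ∀ b ∈ Y, ¬ (SigmaStarGraph n).Adj a b) ↔ Function.Injective f := by
    constructor
    · intro h
      rintro ⟨x₁, y₁⟩ ⟨x₂, y₂⟩ hxy
      have hmul : (x₁ : Equiv.Perm (Fin n)) * y₁ = x₂ * y₂ := hxy
      by_cases hy : (y₁ : Equiv.Perm (Fin n)) = y₂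
      · have hx : (x₁ : Equiv.Perm (Fin n)) = x₂ := by
          rw [hy] at hmul
          exact mul_right_cancel hmul
        ext <;> simp [hx, hy]
      · exfalso
        apply h y₁ y₁.2 y₂ y₂.2
        have key : (y₁ : Equiv.Perm (Fin n)) * (y₂ : Equiv.Perm (Fin n))⁻¹ =
            (x₁ : Equiv.Perm (Fin n))⁻¹ * x₂ := by
          calc (y₁ : Equiv.Perm (Fin n)) * (y₂ : Equiv.Perm (Fin n))⁻¹
              = (x₁ : Equiv.Perm (Fin n))⁻¹ * ((x₁ : Equiv.Perm (Fin n)) * y₁) * (y₂ : Equiv.Perm (Fin n))⁻¹ := by group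
            _ = (x₁ : Equiv.Perm (Fin n))⁻¹ * ((x₂ : Equiv.Perm (Fin n)) * y₂) * (y₂ : Equiv.Perm (Fin n))⁻¹ := by rw [hmul]
            _ = (x₁ : Equiv.Perm (Fin n))⁻¹ * x₂ := by group
        refine ⟨hy, Or.inl ⟨(x₁ : Equiv.Perm (Fin n)), x₁.2, (x₂ : Equiv.Perm (Fin n)), x₂.2, ?_⟩⟩
        rw [key, trans_inv x₁.2]
    · intro h a ha b hb hadj
      obtain ⟨hab, hcase⟩ := hadj
      have key : ∀ c d : Equiv.Perm (Fin n), c ∈ Y → d ∈ Y → c ≠ d →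
          c * d⁻¹ ∈ TstarSq n → False := by
        rintro c d hc hd hcd ⟨t₁, ht₁, t₂, ht₂, ht⟩
        have hc' : c = t₁ * t₂ * d := by
          rw [← ht]; group
        have hmm : t₁⁻¹ * c = t₂ * d := by rw [hc']; group
        have heq : f (⟨t₁⁻¹, show t₁⁻¹ ∈ X by rw [trans_inv ht₁]; exact ht₁⟩, ⟨c, hc⟩) =
            f (⟨t₂, ht₂⟩, ⟨d, hd⟩) := hmm
        have := h heq
        exact hcd (Subtype.ext_iff.1 (congrArg Prod.snd this))
      rcases hcase with hc | hc
      · exact key a b ha hb hab hc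
      · exact key b a hb ha (Ne.symm hab) hc
  -- cardinalities
  have hcardX : Fintype.card ↥X = n.choose 2 := by
    rw [← Nat.card_eq_fintype_card]; exact card_transpositions n
  have hcardY : Y.ncard = Fintype.card ↥Y := by
    rw [← Nat.card_eq_fintype_card, Nat.card_coe_set_eq]
  have hfact : n.choose 2 * (2 * (n - 2).factorial) = n.factorial := by
    have := Nat.choose_mul_factorial_mul_factorial hn
    simpa [Nat.factorial, mul_assoc] using this
  have hcardG : Fintype.card (Equiv.Perm (Fin n)) = n.factorial := by
    simp [Fintype.card_perm]
  have hchoose_pos : 0 < n.choose 2 := Nat.choose_pos hn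
  constructor
  · intro h
    have hb := tiling_iff.1 h
    refine ⟨indep_iff.2 hb.1, ?_⟩
    have := Fintype.card_of_bijective hb
    rw [Fintype.card_prod, hcardX, hcardG] at this
    rw [hcardY]
    exact Nat.eq_of_mul_eq_mul_left hchoose_pos (by rw [this, hfact])
  · rintro ⟨hind, hcard⟩
    apply tiling_iff.2
    rw [Fintype.bijective_iff_injective_and_card]
    refine ⟨indep_iff.1 hind, ?_⟩
    rw [Fintype.card_prod, hcardX, ← hcardY, hcard, hfact, hcardG]
end

section
/- Let n ≥ 2. There exists a subset Y ⊆ S_n such that (T_n*, Y) is a tiling of S_n if and only if the graph Σ_n* contains an independent set C with |C| ≥ 2·(n−2)!. (In particular, every independent set C of Σ_n* satisfies |C| ≤ 2·(n−2)!.) -/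
/-!
In any group, `(x, y) ↦ x * y` is injective on `X × Y` exactly when no two distinct `a, b ∈ Y`
have `a * b⁻¹ ∈ X⁻¹ * X`. Transpositions are involutions, so `X⁻¹ * X = (T_n*)²` for
`X = T_n*`, and injectivity says precisely that `Y` is independent in `Σ_n*`. Injectivity forces
`|X| |Y| ≤ |G|`, with equality exactly for tilings, and `|S_n| / |T_n*| = n! / C(n, 2) = 2 (n-2)!`.
-/

open Set Pointwise Equiv

section Tiling

variable {G : Type*} [Group G] {X Y : Set G}

theorem injOn_mul_prod_iff :
    InjOn (fun p : G × G => p.1 * p.2) (X ×ˢ Y) ↔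
      ∀ a ∈ Y, ∀ b ∈ Y, a * b⁻¹ ∈ X⁻¹ * X → a = b := by
  constructor
  · rintro hinj a ha b hb ⟨x₁, hx₁, x₂, hx₂, hab : x₁ * x₂ = a * b⁻¹⟩
    have key : x₁⁻¹ * a = x₂ * b := by
      rw [inv_mul_eq_iff_eq_mul, ← mul_assoc, hab, inv_mul_cancel_right]
    exact congrArg Prod.snd (hinj (mk_mem_prod hx₁ ha) (mk_mem_prod hx₂ hb) key)
  · rintro h ⟨x₁, y₁⟩ ⟨hx₁, hy₁⟩ ⟨x₂, y₂⟩ ⟨hx₂, hy₂⟩ (hxy : x₁ * y₁ = x₂ * y₂)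
    have key : x₁⁻¹ * x₂ = y₁ * y₂⁻¹ := by
      rw [inv_mul_eq_iff_eq_mul, ← mul_assoc, hxy, mul_inv_cancel_right]
    obtain rfl : y₁ = y₂ := h y₁ hy₁ y₂ hy₂ ⟨x₁⁻¹, inv_mem_inv.2 hx₁, x₂, hx₂, key⟩
    rw [mul_right_cancel hxy]

theorem isTiling_iff_injOn_and_image_eq_univ :
    IsTiling X Y ↔
      InjOn (fun p : G × G => p.1 * p.2) (X ×ˢ Y) ∧
        (fun p : G × G => p.1 * p.2) '' (X ×ˢ Y) = univ := by
  constructor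
  · intro hXY
    refine ⟨fun p hp q hq hpq => (hXY (q.1 * q.2)).unique ⟨hp.1, hp.2, hpq⟩ ⟨hq.1, hq.2, rfl⟩, ?_⟩
    refine eq_univ_of_forall fun g => ?_
    obtain ⟨p, ⟨hp₁, hp₂, hpg⟩, -⟩ := hXY g
    exact ⟨p, ⟨hp₁, hp₂⟩, hpg⟩
  · rintro ⟨hinj, himage⟩ g
    obtain ⟨p, hp, hpg⟩ := himage.symm ▸ mem_univ g
    exact ⟨p, ⟨hp.1, hp.2, hpg⟩, fun q ⟨hq₁, hq₂, hqg⟩ => hinj ⟨hq₁, hq₂⟩ hp (hqg.trans hpg.symm)⟩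

theorem ncard_mul_ncard_le_of_injOn [Finite G]
    (h : InjOn (fun p : G × G => p.1 * p.2) (X ×ˢ Y)) :
    X.ncard * Y.ncard ≤ Nat.card G := by
  rw [← ncard_prod, ← h.ncard_image, ← ncard_univ]
  exact ncard_le_ncard (subset_univ _)

theorem isTiling_iff_injOn_and_ncard_mul_ncard [Finite G] :
    IsTiling X Y ↔
      InjOn (fun p : G × G => p.1 * p.2) (X ×ˢ Y) ∧ X.ncard * Y.ncard = Nat.card G := by
  rw [isTiling_iff_injOn_and_image_eq_univ]
  refine and_congr_right fun hinj => ?_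
  rw [← ncard_prod, ← hinj.ncard_image, ← ncard_univ]
  exact ⟨fun h => h ▸ rfl, fun h => eq_of_subset_of_ncard_le (subset_univ _) h.ge⟩

end Tiling

theorem Equiv.Perm.IsSwap.inv {α : Type*} [DecidableEq α] {σ : Perm α} (h : σ.IsSwap) :
    σ⁻¹.IsSwap := by
  obtain ⟨x, y, hxy, rfl⟩ := h
  exact ⟨x, y, hxy, swap_inv x y⟩

theorem Equiv.Perm.IsSwap.eq_of_support_eq {α : Type*} [DecidableEq α] [Fintype α]
    {σ τ : Perm α} (hσ : σ.IsSwap) (hτ : τ.IsSwap) (h : σ.support = τ.support) : σ = τ := by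
  obtain ⟨a, b, hab, rfl⟩ := hσ
  obtain ⟨c, d, hcd, rfl⟩ := hτ
  rw [Perm.support_swap hab, Perm.support_swap hcd, ← Finset.coe_inj, Finset.coe_pair,
    Finset.coe_pair, pair_eq_pair_iff] at h
  rcases h with ⟨rfl, rfl⟩ | ⟨rfl, rfl⟩
  · rfl
  · exact swap_comm _ _

theorem ncard_isSwap {α : Type*} [DecidableEq α] [Fintype α] :
    {σ : Perm α | σ.IsSwap}.ncard = (Fintype.card α).choose 2 := by
  have hcard : (Finset.powersetCard 2 (Finset.univ : Finset α)).card = (Fintype.card α).choose 2 :=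
    Finset.card_powersetCard 2 _
  rw [← hcard, ← ncard_coe_finset]
  refine ncard_congr (fun σ _ => σ.support) (fun σ hσ => ?_)
    (fun σ τ hσ hτ => Perm.IsSwap.eq_of_support_eq hσ hτ) (fun s hs => ?_)
  · simpa using Perm.card_support_eq_two.2 hσ
  · obtain ⟨a, b, hab, rfl⟩ := Finset.card_eq_two.1 (Finset.mem_powersetCard_univ.1 hs)
    exact ⟨swap a b, ⟨a, b, hab, rfl⟩, Perm.support_swap hab⟩

theorem SimpleGraph.fromRel_mul_inv_mem_adj_iff {G : Type*} [Group G] {S : Set G} (hS : S⁻¹ = S)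
    {a b : G} : (SimpleGraph.fromRel fun g h => g * h⁻¹ ∈ S).Adj a b ↔ a ≠ b ∧ a * b⁻¹ ∈ S := by
  rw [SimpleGraph.fromRel_adj, ← inv_mem_inv, hS, mul_inv_rev, inv_inv, or_self]

section Transpositions

variable {n : ℕ}

theorem ncard_transpositions_mul (hn : 2 ≤ n) :
    (transpositions n).ncard * (2 * (n - 2).factorial) = n.factorial := by
  rw [transpositions, ncard_isSwap, Fintype.card_fin, ← mul_assoc, ← Nat.factorial_two]
  exact Nat.choose_mul_factorial_mul_factorial hn

theorem inv_transpositions : (transpositions n)⁻¹ = transpositions n :=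
  inv_eq_self_iff_inv_subset.2 fun σ (hσ : σ⁻¹.IsSwap) => inv_inv σ ▸ hσ.inv

theorem tstarSq_eq : TstarSq n = (transpositions n)⁻¹ * transpositions n := by
  ext g
  simp [TstarSq, inv_transpositions, mem_mul, eq_comm]

theorem sigmaStarGraph_adj_iff {a b : Perm (Fin n)} :
    (SigmaStarGraph n).Adj a b ↔ a ≠ b ∧ a * b⁻¹ ∈ (transpositions n)⁻¹ * transpositions n := by
  rw [SigmaStarGraph, tstarSq_eq]
  refine SimpleGraph.fromRel_mul_inv_mem_adj_iff ?_
  rw [mul_inv_rev, inv_inv]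

theorem forall_not_adj_sigmaStarGraph_iff_injOn {C : Set (Perm (Fin n))} :
    (∀ a ∈ C, ∀ b ∈ C, ¬ (SigmaStarGraph n).Adj a b) ↔
      InjOn (fun p : Perm (Fin n) × Perm (Fin n) => p.1 * p.2) (transpositions n ×ˢ C) := by
  simp only [injOn_mul_prod_iff, sigmaStarGraph_adj_iff, not_and, not_imp_not]

end Transpositions

theorem transposition_tiling_iff_large_indep_set (n : ℕ) (hn : 2 ≤ n) :
    ((∃ Y : Set (Equiv.Perm (Fin n)), IsTiling (transpositions n) Y) ↔
      (∃ C : Set (Equiv.Perm (Fin n)),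
        (∀ a ∈ C, ∀ b ∈ C, ¬ (SigmaStarGraph n).Adj a b) ∧
        C.ncard ≥ 2 * (n - 2).factorial)) ∧
    (∀ C : Set (Equiv.Perm (Fin n)),
      (∀ a ∈ C, ∀ b ∈ C, ¬ (SigmaStarGraph n).Adj a b) →
      C.ncard ≤ 2 * (n - 2).factorial) := by
  have hcard :
      (transpositions n).ncard * (2 * (n - 2).factorial) = Nat.card (Equiv.Perm (Fin n)) := by
    rw [ncard_transpositions_mul hn, Nat.card_perm, Nat.card_eq_fintype_card, Fintype.card_fin]
  have hpos : 0 < (transpositions n).ncard := Nat.pos_of_mul_pos_right (hcard ▸ Nat.card_pos)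
  have bound : ∀ C : Set (Equiv.Perm (Fin n)), (∀ a ∈ C, ∀ b ∈ C, ¬ (SigmaStarGraph n).Adj a b) →
      C.ncard ≤ 2 * (n - 2).factorial := fun C hC =>
    Nat.le_of_mul_le_mul_left
      (hcard ▸ ncard_mul_ncard_le_of_injOn (forall_not_adj_sigmaStarGraph_iff_injOn.1 hC)) hpos
  refine ⟨⟨?_, ?_⟩, bound⟩
  · rintro ⟨Y, hY⟩
    rw [isTiling_iff_injOn_and_ncard_mul_ncard, ← hcard] at hY
    exact ⟨Y, forall_not_adj_sigmaStarGraph_iff_injOn.2 hY.1,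
      (Nat.eq_of_mul_eq_mul_left hpos hY.2).ge⟩
  · rintro ⟨C, hC, hge⟩
    have hcardC : C.ncard = 2 * (n - 2).factorial := le_antisymm (bound C hC) hge
    exact ⟨C, isTiling_iff_injOn_and_ncard_mul_ncard.2
      ⟨forall_not_adj_sigmaStarGraph_iff_injOn.1 hC, hcardC ▸ hcard⟩⟩
end

section
/- Let n ≥ 5 and suppose (T_n, Y) is a tiling of the symmetric group S_n. Then Y avoids intersection n−3: for all y_1, y_2 ∈ Y, the number of fixed points of the permutation y_1·y_2⁻¹ on {1,…,n} is not equal to n−3 (equivalently, y_1·y_2⁻¹ is never a 3-cycle). -/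
/-- A permutation acting as a 3-cycle `a ↦ b ↦ c ↦ a` and fixing everything else
equals `swap a b * swap b c`. -/
lemma three_cycle_eq_swap_mul_swap {α : Type*} [DecidableEq α] (σ : Equiv.Perm α)
    (a b c : α) (hab : a ≠ b) (hbc : b ≠ c) (hca : c ≠ a)
    (h1 : σ a = b) (h2 : σ b = c) (h3 : σ c = a)
    (h4 : ∀ x, x ≠ a → x ≠ b → x ≠ c → σ x = x) :
    σ = Equiv.swap a b * Equiv.swap b c := by
  ext x
  by_cases hxa : x = a
  · subst hxa
    rw [Equiv.Perm.mul_apply, Equiv.swap_apply_of_ne_of_ne hab (fun h => hca h.symm),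
      Equiv.swap_apply_left, h1]
  by_cases hxb : x = b
  · subst hxb
    rw [Equiv.Perm.mul_apply, Equiv.swap_apply_left,
      Equiv.swap_apply_of_ne_of_ne hca (fun h => hbc h.symm), h2]
  by_cases hxc : x = c
  · subst hxc
    rw [Equiv.Perm.mul_apply, Equiv.swap_apply_right, Equiv.swap_apply_right, h3]
  · rw [Equiv.Perm.mul_apply, Equiv.swap_apply_of_ne_of_ne hxb hxc,
      Equiv.swap_apply_of_ne_of_ne hxa hxb, h4 x hxa hxb hxc]

theorem avoids_intersection_of_tiling (n : ℕ) (hn : 5 ≤ n)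
    (Y : Set (Equiv.Perm (Fin n))) (hT : IsTiling (transpositionsWithId n) Y) :
    ∀ y₁ ∈ Y, ∀ y₂ ∈ Y,
      (Finset.univ.filter fun x : Fin n => (y₁ * y₂⁻¹) x = x).card ≠ n - 3 := by
  intro y₁ hy₁ y₂ hy₂ hcard
  set σ := y₁ * y₂⁻¹ with hσdef
  set S := Finset.univ.filter (fun x : Fin n => ¬ σ x = x) with hSdef
  have hmem : ∀ x : Fin n, x ∈ S ↔ σ x ≠ x := by
    intro x; simp [hSdef]
  have hScard : S.card = 3 := by
    have h := Finset.card_filter_add_card_filter_not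
      (p := fun x : Fin n => σ x = x) (s := Finset.univ)
    rw [hcard, Finset.card_univ, Fintype.card_fin] at h
    rw [hSdef]
    omega
  obtain ⟨a, haS⟩ := Finset.card_pos.mp (by rw [hScard]; norm_num : 0 < S.card)
  have ha : σ a ≠ a := (hmem a).mp haS
  obtain ⟨b, hb⟩ : ∃ b, σ a = b := ⟨_, rfl⟩
  obtain ⟨c, hc⟩ : ∃ c, σ b = c := ⟨_, rfl⟩
  have hab : a ≠ b := fun h => ha (h ▸ hb)
  have hbc : b ≠ c := fun h => hab (σ.injective (by rw [hb, hc, h]))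
  have hbS : b ∈ S := (hmem b).mpr (by rw [hc]; exact fun h => hbc h.symm)
  -- c ≠ a : otherwise σ would be a transposition on {a,b} plus an impossible third point
  have hca : c ≠ a := by
    intro hc0
    have hba' : σ b = a := hc.trans hc0
    have hSab : ¬ S ⊆ ({a, b} : Finset (Fin n)) := by
      intro hsub
      have := Finset.card_le_card hsub
      have h2 : ({a, b} : Finset (Fin n)).card ≤ 2 :=
        (Finset.card_insert_le _ _).trans (by simp)
      omega
    obtain ⟨d, hdS, hd⟩ := Finset.not_subset.mp hSab
    simp only [Finset.mem_insert, Finset.mem_singleton, not_or] at hd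
    obtain ⟨hda, hdb⟩ := hd
    have had : a ≠ d := fun h => hda h.symm
    have hbd : b ≠ d := fun h => hdb h.symm
    have habd : ({a, b, d} : Finset (Fin n)).card = 3 := by
      rw [Finset.card_insert_of_notMem (by simp [hab, had]),
        Finset.card_insert_of_notMem (by simp [hbd])]
      simp
    have hSeq : ({a, b, d} : Finset (Fin n)) = S := by
      apply Finset.eq_of_subset_of_card_le
      · intro x hx
        simp only [Finset.mem_insert, Finset.mem_singleton] at hx
        rcases hx with rfl | rfl | rfl
        · exact haS
        · exact hbS
        · exact hdS
      · rw [hScard, habd]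
    have hdd : σ d ≠ d := (hmem d).mp hdS
    have hdS' : σ d ∈ S := (hmem _).mpr (fun h => hdd (σ.injective h))
    rw [← hSeq] at hdS'
    simp only [Finset.mem_insert, Finset.mem_singleton] at hdS'
    rcases hdS' with h | h | h
    · exact hdb (σ.injective (h.trans hba'.symm))
    · exact hda (σ.injective (h.trans hb.symm))
    · exact hdd h
  have hcS : c ∈ S := (hmem c).mpr (fun h => hbc (σ.injective (hc.trans h.symm)))
  have hac' : a ≠ c := fun h => hca h.symm
  have habc : ({a, b, c} : Finset (Fin n)).card = 3 := by
    rw [Finset.card_insert_of_notMem (by simp [hab, hac']),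
      Finset.card_insert_of_notMem (by simp [hbc])]
    simp
  have hSeq : ({a, b, c} : Finset (Fin n)) = S := by
    apply Finset.eq_of_subset_of_card_le
    · intro x hx
      simp only [Finset.mem_insert, Finset.mem_singleton] at hx
      rcases hx with rfl | rfl | rfl
      · exact haS
      · exact hbS
      · exact hcS
    · rw [hScard, habc]
  have hcc : σ c = a := by
    have hcne : σ c ≠ c := (hmem c).mp hcS
    have h1 : σ c ∈ S := (hmem _).mpr (fun h => hcne (σ.injective h))
    rw [← hSeq] at h1
    simp only [Finset.mem_insert, Finset.mem_singleton] at h1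
    rcases h1 with h | h | h
    · exact h
    · exact absurd (σ.injective (h.trans hb.symm)) hca
    · exact absurd (σ.injective (h.trans hc.symm)) (fun h' => hbc h'.symm)
  have hfix : ∀ x, x ≠ a → x ≠ b → x ≠ c → σ x = x := by
    intro x hxa hxb hxc
    by_contra h
    have : x ∈ S := (hmem x).mpr h
    rw [← hSeq] at this
    simp only [Finset.mem_insert, Finset.mem_singleton] at this
    tauto
  have hσeq : σ = Equiv.swap a b * Equiv.swap b c :=
    three_cycle_eq_swap_mul_swap σ a b c hab hbc hca hb hc hcc hfix
  have h1 : Equiv.swap a b ∈ transpositionsWithId n := Or.inr ⟨a, b, hab, rfl⟩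
  have h2 : Equiv.swap b c ∈ transpositionsWithId n := Or.inr ⟨b, c, hbc, rfl⟩
  have hy : y₁ = σ * y₂ := by rw [hσdef]; group
  have hprod : Equiv.swap a b * y₁ = Equiv.swap b c * y₂ := by
    rw [hy, hσeq]
    simp only [← mul_assoc]
    rw [Equiv.swap_mul_self, one_mul]
  obtain ⟨p, _, hup⟩ := hT (Equiv.swap b c * y₂)
  have e1 := hup (Equiv.swap a b, y₁) ⟨h1, hy₁, hprod⟩
  have e2 := hup (Equiv.swap b c, y₂) ⟨h2, hy₂, rfl⟩
  have heq : Equiv.swap a b = Equiv.swap b c :=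
    congrArg Prod.fst (e1.trans e2.symm)
  have hcontra : Equiv.swap a b c = Equiv.swap b c c := by rw [heq]
  rw [Equiv.swap_apply_of_ne_of_ne hca (fun h => hbc h.symm),
    Equiv.swap_apply_right] at hcontra
  exact hbc hcontra.symm
end

section
/- Let n ≥ 5 and suppose (T_n*, Y) is a tiling of the symmetric group S_n, where T_n* is the set of all transpositions in S_n. Then Y avoids intersection n−3: for all y_1, y_2 ∈ Y, the number of fixed points of the permutation y_1·y_2⁻¹ on {1,…,n} is not equal to n−3 (equivalently, y_1·y_2⁻¹ is never a 3-cycle). -/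
theorem avoids_intersection_of_transposition_tiling (n : ℕ) (hn : 5 ≤ n)
    (Y : Set (Equiv.Perm (Fin n))) (hT : IsTiling (transpositions n) Y) :
    ∀ y₁ ∈ Y, ∀ y₂ ∈ Y,
      (Finset.univ.filter fun x : Fin n => (y₁ * y₂⁻¹) x = x).card ≠ n - 3 := by
  intro y₁ hy₁ y₂ hy₂ hcard
  set σ := y₁ * y₂⁻¹ with hσ
  have hsupp : σ.support.card = 3 := by
    have h1 : (Finset.univ.filter fun x : Fin n => σ x = x).card
        + (Finset.univ.filter fun x : Fin n => ¬ σ x = x).card = n := by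
      rw [Finset.card_filter_add_card_filter_not, Finset.card_univ, Fintype.card_fin]
    have h2 : σ.support = Finset.univ.filter fun x => ¬ σ x = x := rfl
    rw [h2]; omega
  have h3 : σ.IsThreeCycle := card_support_eq_three_iff.mp hsupp
  have hord : σ ^ 3 = 1 := by
    have h := h3.orderOf
    rw [← h]; exact pow_orderOf_eq_one σ
  obtain ⟨a, ha⟩ : ∃ a, a ∈ σ.support :=
    Finset.card_pos.mp (by omega)
  have ha' : σ a ≠ a := Equiv.Perm.mem_support.mp ha
  set b := σ a with hb
  set c := σ b with hc
  have hca : σ c = a := by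
    have h := congrArg (fun f => f a) hord
    simpa [pow_succ, Equiv.Perm.mul_apply, hb, hc] using h
  have hba : b ≠ a := ha'
  have hcb : c ≠ b := by
    intro h
    exact hba (σ.injective (show σ b = σ a from h.trans hb))
  have hcane : c ≠ a := by
    intro h
    have h2 : σ c = σ a := by rw [h]
    rw [hca, ← hb] at h2
    exact hba h2.symm
  have hbmem : b ∈ σ.support := Equiv.Perm.mem_support.mpr hcb
  have hcmem : c ∈ σ.support := Equiv.Perm.mem_support.mpr (by rw [hca]; exact hcane.symm)
  have hsub : ({a, b, c} : Finset (Fin n)) ⊆ σ.support := by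
    intro x hx
    simp only [Finset.mem_insert, Finset.mem_singleton] at hx
    rcases hx with rfl | rfl | rfl
    · exact ha
    · exact hbmem
    · exact hcmem
  have hcard3 : ({a, b, c} : Finset (Fin n)).card = 3 := by
    rw [Finset.card_insert_of_notMem (by simp [hba.symm, hcane.symm]),
      Finset.card_insert_of_notMem (by simp [hcb.symm]), Finset.card_singleton]
  have hset : σ.support = ({a, b, c} : Finset (Fin n)) :=
    (Finset.eq_of_subset_of_card_le hsub (by omega)).symm
  have hσeq : σ = Equiv.swap a b * Equiv.swap b c := by
    ext x
    rcases eq_or_ne x a with rfl | hxa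
    · simp [Equiv.Perm.mul_apply, Equiv.swap_apply_of_ne_of_ne hba.symm hcane.symm,
        Equiv.swap_apply_left, ← hb]
    rcases eq_or_ne x b with rfl | hxb
    · simp [Equiv.Perm.mul_apply, Equiv.swap_apply_left,
        Equiv.swap_apply_of_ne_of_ne hcane hcb, ← hc]
    rcases eq_or_ne x c with rfl | hxc
    · simp [Equiv.Perm.mul_apply, Equiv.swap_apply_right, Equiv.swap_apply_right, hca]
    · have hx : x ∉ σ.support := by
        rw [hset]; simp [hxa, hxb, hxc]
      rw [Equiv.Perm.notMem_support] at hx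
      rw [hx, Equiv.Perm.mul_apply, Equiv.swap_apply_of_ne_of_ne hxb hxc,
        Equiv.swap_apply_of_ne_of_ne hxa hxb]
  have hy₁eq : y₁ = σ * y₂ := by
    rw [hσ]; group
  obtain ⟨p, -, hpuniq⟩ := hT (Equiv.swap b c * y₂)
  have h₁ : ((Equiv.swap b c, y₂) : _ × _) = p := by
    apply hpuniq
    exact ⟨⟨b, c, hcb.symm, rfl⟩, hy₂, rfl⟩
  have h₂ : ((Equiv.swap a b, y₁) : _ × _) = p := by
    apply hpuniq
    refine ⟨⟨a, b, hba.symm, rfl⟩, hy₁, ?_⟩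
    rw [hy₁eq, hσeq, ← mul_assoc, ← mul_assoc, Equiv.swap_mul_self, one_mul]
  have hswap : Equiv.swap b c = Equiv.swap a b := by
    have := h₁.trans h₂.symm
    exact congrArg Prod.fst this
  have := congrArg (fun f => f a) hswap
  simp only [Equiv.swap_apply_of_ne_of_ne hba.symm hcane.symm, Equiv.swap_apply_left] at this
  exact hba this.symm
end

section
/- Neither T_4 nor T_4* tiles the symmetric group S_4: there is no subset Y ⊆ S_4 such that (T_4, Y) is a tiling of S_4, no subset X ⊆ S_4 such that (X, T_4) is a tiling of S_4, no subset Y ⊆ S_4 such that (T_4*, Y) is a tiling of S_4, and no subset X ⊆ S_4 such that (X, T_4*) is a tiling of S_4. -/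
open Equiv Equiv.Perm

instance : DecidablePred (Equiv.Perm.IsSwap : Perm (Fin 4) → Prop) :=
  fun σ => inferInstanceAs (Decidable (∃ x y, x ≠ y ∧ σ = Equiv.swap x y))

instance : DecidablePred (· ∈ transpositions 4) :=
  fun σ => inferInstanceAs (Decidable σ.IsSwap)

instance : DecidablePred (· ∈ transpositionsWithId 4) :=
  fun σ => inferInstanceAs (Decidable (σ = 1 ∨ σ.IsSwap))

private lemma tiling_card {G : Type*} [Group G] {X Y : Set G} (h : IsTiling X Y) :
    Nat.card X * Nat.card Y = Nat.card G := by
  rw [← Nat.card_prod]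
  apply Nat.card_eq_of_bijective (fun p : X × Y => (p.1 : G) * p.2)
  constructor
  · rintro ⟨x, y⟩ ⟨x', y'⟩ hxy
    obtain ⟨p, -, hu⟩ := h ((x : G) * y)
    have h1 := hu ((x : G), (y : G)) ⟨x.2, y.2, rfl⟩
    have h2 := hu ((x' : G), (y' : G)) ⟨x'.2, y'.2, hxy.symm⟩
    have h3 := h1.trans h2.symm
    simp only [Prod.mk.injEq] at h3
    simp [Prod.ext_iff, Subtype.ext_iff, h3.1, h3.2]
  · intro g
    obtain ⟨p, ⟨h1, h2, h3⟩, -⟩ := h g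
    exact ⟨⟨⟨p.1, h1⟩, ⟨p.2, h2⟩⟩, h3⟩

private lemma card_T_s18 : Nat.card (transpositionsWithId 4) = 7 := by
  rw [Nat.card_eq_fintype_card]; decide

private lemma card_Tstar : Nat.card (transpositions 4) = 6 := by
  rw [Nat.card_eq_fintype_card]; decide

private lemma card_S4 : Nat.card (Perm (Fin 4)) = 24 := by
  rw [Nat.card_eq_fintype_card]; decide

private lemma even_decomp : ∀ σ : Perm (Fin 4), Perm.sign σ = 1 → σ ≠ 1 →
    ∃ a b c d : Fin 4, a ≠ b ∧ c ≠ d ∧ σ = swap a b * swap c d := by decide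

private lemma card_le_two_of_pairwise_sign {S : Set (Perm (Fin 4))}
    (hs : ∀ x ∈ S, ∀ x' ∈ S, x ≠ x' → Perm.sign x ≠ Perm.sign x') :
    Nat.card S ≤ 2 := by
  have hinj : Function.Injective (fun x : S => Perm.sign (x : Perm (Fin 4))) := by
    rintro ⟨x, hx⟩ ⟨x', hx'⟩ hxx
    by_contra hne
    exact hs x hx x' hx' (fun hh => hne (Subtype.ext hh)) hxx
  calc Nat.card S ≤ Nat.card ℤˣ := Nat.card_le_card_of_injective _ hinj
    _ = 2 := by rw [Nat.card_eq_fintype_card]; decide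

private lemma sign_mul_inv_one {u v : Perm (Fin 4)}
    (hsgn : Perm.sign u = Perm.sign v) : Perm.sign (u * v⁻¹) = 1 := by
  rw [map_mul, map_inv, hsgn]
  rcases Int.units_eq_one_or (Perm.sign v) with h | h <;> rw [h] <;> decide

theorem no_tiling_S4 :
    (¬ ∃ Y : Set (Equiv.Perm (Fin 4)), IsTiling (transpositionsWithId 4) Y) ∧
    (¬ ∃ X : Set (Equiv.Perm (Fin 4)), IsTiling X (transpositionsWithId 4)) ∧
    (¬ ∃ Y : Set (Equiv.Perm (Fin 4)), IsTiling (transpositions 4) Y) ∧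
    (¬ ∃ X : Set (Equiv.Perm (Fin 4)), IsTiling X (transpositions 4)) := by
  refine ⟨?_, ?_, ?_, ?_⟩
  · rintro ⟨Y, h⟩
    have := tiling_card h
    rw [card_T_s18, card_S4] at this
    omega
  · rintro ⟨X, h⟩
    have := tiling_card h
    rw [card_T_s18, card_S4] at this
    omega
  · -- (T*, Y)
    rintro ⟨Y, h⟩
    have hcard := tiling_card h
    rw [card_Tstar, card_S4] at hcard
    have hle : Nat.card Y ≤ 2 := by
      apply card_le_two_of_pairwise_sign
      intro y hy y' hy' hne hsgn
      have h1 : Perm.sign (y' * y⁻¹) = 1 := sign_mul_inv_one hsgn.symm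
      have h2 : y' * y⁻¹ ≠ 1 := fun hh => hne (by
        have := congrArg (· * y) hh
        simpa [mul_assoc] using this.symm)
      obtain ⟨a, b, c, d, hab, hcd, heq⟩ := even_decomp _ h1 h2
      have hy'eq : y' = swap a b * swap c d * y := by
        have := congrArg (· * y) heq
        simpa [mul_assoc] using this
      obtain ⟨p, -, hu⟩ := h (swap c d * y)
      have e1 := hu (swap c d, y) ⟨⟨c, d, hcd, rfl⟩, hy, rfl⟩
      have e2 := hu (swap a b, y') ⟨⟨a, b, hab, rfl⟩, hy', by
        rw [hy'eq, ← mul_assoc, ← mul_assoc, swap_mul_self, one_mul]⟩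
      have e3 := e1.trans e2.symm
      exact hne (congrArg Prod.snd e3)
    omega
  · -- (X, T*)
    rintro ⟨X, h⟩
    have hcard := tiling_card h
    rw [card_Tstar, card_S4] at hcard
    have hle : Nat.card X ≤ 2 := by
      apply card_le_two_of_pairwise_sign
      intro x hx x' hx' hne hsgn
      have h1 : Perm.sign (x⁻¹ * x') = 1 := by
        have := sign_mul_inv_one (u := x⁻¹) (v := x'⁻¹)
          (by rw [map_inv, map_inv, hsgn])
        simpa using this
      have h2 : x⁻¹ * x' ≠ 1 := fun hh => hne (by
        have := congrArg (x * ·) hh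
        simpa [mul_assoc] using this.symm)
      obtain ⟨a, b, c, d, hab, hcd, heq⟩ := even_decomp _ h1 h2
      have hx'eq : x' = x * (swap a b * swap c d) := by
        rw [← heq, mul_inv_cancel_left]
      obtain ⟨p, -, hu⟩ := h (x * swap a b)
      have e1 := hu (x, swap a b) ⟨hx, ⟨a, b, hab, rfl⟩, rfl⟩
      have e2 := hu (x', swap c d) ⟨hx', ⟨c, d, hcd, rfl⟩, by
        rw [hx'eq, mul_assoc, mul_assoc, swap_mul_self, mul_one]⟩
      have e3 := e1.trans e2.symm
      exact hne (congrArg Prod.fst e3)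
    omega
end

section
/- T_6 does not tile the symmetric group S_6: there is no subset Y ⊆ S_6 such that (T_6, Y) is a tiling of S_6, and there is no subset X ⊆ S_6 such that (X, T_6) is a tiling of S_6. -/
open Equiv Equiv.Perm Finset

/-- A tiling gives a sum-over-product decomposition for any function. -/
lemma tiling_sum {G : Type*} [Group G] [Fintype G] {X Y : Set G}
    (h : IsTiling X Y) {XF YF : Finset G} (hX : ∀ g, g ∈ XF ↔ g ∈ X)
    (hY : ∀ g, g ∈ YF ↔ g ∈ Y)
    {M : Type*} [AddCommMonoid M] (F : G → M) :
    ∑ p ∈ XF ×ˢ YF, F (p.1 * p.2) = ∑ g : G, F g := by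
  refine Finset.sum_nbij' (i := fun p => p.1 * p.2) (j := fun g => (h g).choose)
    (fun p _ => Finset.mem_univ _) ?_ ?_ ?_ (fun p _ => rfl)
  · intro g _
    obtain ⟨⟨hx, hy, _⟩, _⟩ := (h g).choose_spec
    exact Finset.mem_product.2 ⟨(hX _).2 hx, (hY _).2 hy⟩
  · intro p hp
    obtain ⟨hx, hy⟩ := Finset.mem_product.1 hp
    exact ((h (p.1 * p.2)).choose_spec.2 p ⟨(hX _).1 hx, (hY _).1 hy, rfl⟩).symm
  · intro g _
    exact (h g).choose_spec.1.2.2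

/-- The computable finset version of `transpositionsWithId 6`. -/
def TF : Finset (Perm (Fin 6)) :=
  Finset.univ.filter (fun σ => σ = 1 ∨ σ.support.card = 2)

lemma mem_TF (g : Perm (Fin 6)) : g ∈ TF ↔ g ∈ transpositionsWithId 6 := by
  simp [TF, transpositionsWithId, ← card_support_eq_two]

/-- The finset of transpositions in `S_6`. -/
def SwF : Finset (Perm (Fin 6)) :=
  Finset.univ.filter (fun σ => σ.support.card = 2)

set_option maxHeartbeats 4000000 in
lemma SwF_card : SwF.card = 15 := by decide

lemma TF_eq : TF = insert 1 SwF := by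
  ext g
  simp [TF, SwF, Finset.mem_insert, or_comm]

lemma one_not_mem_SwF : (1 : Perm (Fin 6)) ∉ SwF := by
  simp [SwF]

lemma TF_card : TF.card = 16 := by
  rw [TF_eq, Finset.card_insert_of_notMem one_not_mem_SwF, SwF_card]

lemma TF_sign : ∑ x ∈ TF, ((sign x : ℤˣ) : ℤ) = -14 := by
  rw [TF_eq, Finset.sum_insert one_not_mem_SwF]
  have h : ∀ x ∈ SwF, ((sign x : ℤˣ) : ℤ) = -1 := by
    intro x hx
    have : x.IsSwap := card_support_eq_two.1 (by simpa [SwF] using hx)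
    obtain ⟨a, b, hab, rfl⟩ := this
    simp [sign_swap hab]
  rw [Finset.sum_congr rfl h]
  simp [SwF_card]

lemma sum_sign_univ : ∑ g : Perm (Fin 6), ((sign g : ℤˣ) : ℤ) = 0 := by
  have key : ∑ g : Perm (Fin 6), ((sign g : ℤˣ) : ℤ)
      = ∑ g : Perm (Fin 6), ((sign (Equiv.swap (0 : Fin 6) 1 * g) : ℤˣ) : ℤ) :=
    (Equiv.sum_comp (Equiv.mulLeft (Equiv.swap (0 : Fin 6) 1))
      (fun g => ((sign g : ℤˣ) : ℤ))).symm
  have h2 : ∀ g : Perm (Fin 6),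
      ((sign (Equiv.swap (0 : Fin 6) 1 * g) : ℤˣ) : ℤ) = -((sign g : ℤˣ) : ℤ) := by
    intro g
    rw [Equiv.Perm.sign_mul, sign_swap (by decide : (0 : Fin 6) ≠ 1)]
    simp
  rw [Finset.sum_congr rfl (fun g _ => h2 g), Finset.sum_neg_distrib] at key
  linarith

lemma parity_contra (S : Finset (Perm (Fin 6))) (hc : S.card = 45)
    (hs : ∑ y ∈ S, ((sign y : ℤˣ) : ℤ) = 0) : False := by
  have h2 : ((∑ y ∈ S, ((sign y : ℤˣ) : ℤ) : ℤ) : ZMod 2) = ((S.card : ℤ) : ZMod 2) := by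
    push_cast
    rw [Finset.sum_congr rfl (fun y _ => ?_), Finset.sum_const, nsmul_eq_mul, mul_one]
    rcases Int.units_eq_one_or (sign y) with h | h <;> rw [h] <;> decide
  rw [hs, hc] at h2
  norm_num at h2
  revert h2
  decide

lemma card_perm6 : Fintype.card (Perm (Fin 6)) = 720 := by
  simp [Fintype.card_perm]
  decide

lemma tiling_card_s19 {X Y : Set (Perm (Fin 6))} (h : IsTiling X Y)
    {XF' YF' : Finset (Perm (Fin 6))} (hX : ∀ g, g ∈ XF' ↔ g ∈ X)
    (hY : ∀ g, g ∈ YF' ↔ g ∈ Y) : XF'.card * YF'.card = 720 := by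
  have := tiling_sum h hX hY (fun _ => (1 : ℕ))
  simpa [Finset.card_product, card_perm6] using this

lemma tiling_sign {X Y : Set (Perm (Fin 6))} (h : IsTiling X Y)
    {XF' YF' : Finset (Perm (Fin 6))} (hX : ∀ g, g ∈ XF' ↔ g ∈ X)
    (hY : ∀ g, g ∈ YF' ↔ g ∈ Y) :
    (∑ x ∈ XF', ((sign x : ℤˣ) : ℤ)) * (∑ y ∈ YF', ((sign y : ℤˣ) : ℤ)) = 0 := by
  have key := tiling_sum h hX hY (fun g => ((sign g : ℤˣ) : ℤ))
  rw [sum_sign_univ] at key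
  rw [← key, Finset.sum_product]
  rw [Finset.sum_mul]
  refine Finset.sum_congr rfl fun x _ => ?_
  rw [Finset.mul_sum]
  refine Finset.sum_congr rfl fun y _ => ?_
  rw [Equiv.Perm.sign_mul]
  push_cast
  ring

theorem no_tiling_S6 :
    (¬ ∃ Y : Set (Equiv.Perm (Fin 6)), IsTiling (transpositionsWithId 6) Y) ∧
    (¬ ∃ X : Set (Equiv.Perm (Fin 6)), IsTiling X (transpositionsWithId 6)) := by
  constructor
  · rintro ⟨Y, hT⟩
    classical
    have hY : ∀ g, g ∈ Y.toFinset ↔ g ∈ Y := fun g => Set.mem_toFinset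
    have hc := tiling_card_s19 hT mem_TF hY
    rw [TF_card] at hc
    have hcY : Y.toFinset.card = 45 := by omega
    have hs := tiling_sign hT mem_TF hY
    rw [TF_sign] at hs
    have hsY : ∑ y ∈ Y.toFinset, ((sign y : ℤˣ) : ℤ) = 0 := by
      rcases mul_eq_zero.1 hs with h | h
      · norm_num at h
      · exact h
    exact parity_contra _ hcY hsY
  · rintro ⟨X, hT⟩
    classical
    have hX : ∀ g, g ∈ X.toFinset ↔ g ∈ X := fun g => Set.mem_toFinset
    have hc := tiling_card_s19 hT hX mem_TF
    rw [TF_card] at hc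
    have hcX : X.toFinset.card = 45 := by omega
    have hs := tiling_sign hT hX mem_TF
    rw [TF_sign] at hs
    have hsX : ∑ x ∈ X.toFinset, ((sign x : ℤˣ) : ℤ) = 0 := by
      rcases mul_eq_zero.1 hs with h | h
      · exact h
      · norm_num at h
    exact parity_contra _ hcX hsX
end
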